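/- arXiv:math-ph/0612029 — 12 statements merged into one kernel-verified Lean document; each statement's English description precedes it below -/
import Mathlib

section
/- Let N be a positive integer, R ≤ N, let κ' = diag(κ'_1,…,κ'_R) and κ'' = diag(κ''_{R+1},…,κ''_N) be diagonal real matrices with strictly positive entries, and set κ = diag(κ',κ''). Let Q₀ be a real (N−R)×R matrix such that for every i ≤ R and j > R, either (Q₀)_{ji} = 0 or κ''_j < κ'_i, and let X₀ be a symmetric real R×R matrix. Define the N×N block matrices C = [[I,0],[Q₀,0]] and D = [[X₀,−Q₀ᵀ],[0,I]], and the matrix-valued function σ(r) = κ^{−1/2}(e^{κr}C + e^{−κr}D). Then there exists r₀ ≥ 0 such that σ(r) is invertible for all r ≥ r₀, and the superpotential U(r) = σ'(r)σ(r)⁻¹ converges, as r → ∞, to the diagonal matrix whose i-th diagonal entry is +κ_i for i = 1,…,R and −κ_i for i = R+1,…,N. -/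
/-!
Write `κ_ε = diag(κ', -κ'')`. Both combinations `e^{κr} C ± e^{-κr} D` factor as
`K_±(r) e^{κ_ε r}`, where the blocks of `K_±(r)` are built from `e^{-κ'r} X₀ e^{-κ'r}` and
`e^{κ''r} Q₀ e^{-κ'r}`. Both decay (the second thanks to the condition on `Q₀`), so
`K_±(r) → diag(1, ±1)`. Since `σ = κ^{-1/2} K_+ e^{κ_ε r}` and `σ' = κ^{1/2} K_- e^{κ_ε r}`,
the exponential cancels in `σ' σ⁻¹ = κ^{1/2} K_- K_+⁻¹ κ^{1/2}`, which therefore tends to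
`κ^{1/2} diag(1, -1) κ^{1/2}`.
-/

open Matrix Filter Topology

theorem Matrix.inv_diagonal_inv {ι K : Type*} [Fintype ι] [DecidableEq ι] [Field K] {v : ι → K}
    (hv : ∀ i, v i ≠ 0) : (diagonal fun i => (v i)⁻¹)⁻¹ = diagonal v := by
  refine inv_eq_left_inv ?_
  rw [diagonal_mul_diagonal, ← diagonal_one]
  exact congrArg diagonal (funext fun i => mul_inv_cancel₀ (hv i))

theorem Filter.Tendsto.matrix_fromBlocks {α R l m n o : Type*} [TopologicalSpace R]
    {f : Filter α} {A : α → Matrix n l R} {B : α → Matrix n m R} {C : α → Matrix o l R}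
    {D : α → Matrix o m R} {A₀ : Matrix n l R} {B₀ : Matrix n m R} {C₀ : Matrix o l R}
    {D₀ : Matrix o m R} (hA : Tendsto A f (𝓝 A₀)) (hB : Tendsto B f (𝓝 B₀))
    (hC : Tendsto C f (𝓝 C₀)) (hD : Tendsto D f (𝓝 D₀)) :
    Tendsto (fun x => fromBlocks (A x) (B x) (C x) (D x)) f (𝓝 (fromBlocks A₀ B₀ C₀ D₀)) := by
  have hcont : Continuous fun p : Matrix n l R × Matrix n m R × Matrix o l R × Matrix o m R =>
      fromBlocks p.1 p.2.1 p.2.2.1 p.2.2.2 := by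
    fun_prop
  exact (hcont.tendsto _).comp (hA.prodMk_nhds (hB.prodMk_nhds (hC.prodMk_nhds hD)))

section Limits

variable {α 𝕜 ι : Type*} [Field 𝕜] [TopologicalSpace 𝕜] [IsTopologicalDivisionRing 𝕜]
  [Fintype ι] [DecidableEq ι] {l : Filter α}

theorem Matrix.tendsto_inv_of_tendsto_one {M : α → Matrix ι ι 𝕜} (hM : Tendsto M l (𝓝 1)) :
    Tendsto (fun r => (M r)⁻¹) l (𝓝 1) := by
  have hinv : ContinuousAt Inv.inv (1 : Matrix ι ι 𝕜) :=
    continuousAt_matrix_inv 1 <| by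
      rw [det_one, Ring.inverse_eq_inv']
      exact continuousAt_inv₀ one_ne_zero
  simpa [Function.comp_def] using hinv.tendsto.comp hM

theorem Matrix.eventually_isUnit_of_tendsto_one [T1Space 𝕜] {M : α → Matrix ι ι 𝕜}
    (hM : Tendsto M l (𝓝 1)) : ∀ᶠ r in l, IsUnit (M r) := by
  have hdet : Tendsto (fun r => (M r).det) l (𝓝 1) := by
    simpa [Function.comp_def] using (continuous_id.matrix_det.tendsto (1 : Matrix ι ι 𝕜)).comp hM
  filter_upwards [hdet.eventually_ne one_ne_zero] with r hr
  exact (isUnit_iff_isUnit_det _).mpr hr.isUnit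

theorem Matrix.tendsto_mul_inv_of_factorization {M M' A : α → Matrix ι ι 𝕜}
    {P P' S : Matrix ι ι 𝕜} (hM : Tendsto M l (𝓝 1)) (hM' : Tendsto M' l (𝓝 S))
    (hA : ∀ r, IsUnit (A r)) :
    Tendsto (fun r => P' * (M' r * A r) * (P * (M r * A r))⁻¹) l (𝓝 (P' * S * P⁻¹)) := by
  have hcancel : ∀ r, P' * (M' r * A r) * (P * (M r * A r))⁻¹ = P' * M' r * (M r)⁻¹ * P⁻¹ := by
    intro r
    simp only [mul_inv_rev, Matrix.mul_assoc,
      mul_nonsing_inv_cancel_left _ _ ((isUnit_iff_isUnit_det _).mp (hA r))]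
  simp only [hcancel]
  simpa using ((tendsto_const_nhds.mul hM').mul (tendsto_inv_of_tendsto_one hM)).mul_const P⁻¹

end Limits

section ExpDiag

variable {ι : Type*} [DecidableEq ι]

noncomputable def expDiag (κ : ι → ℝ) (r : ℝ) : Matrix ι ι ℝ :=
  diagonal fun i => Real.exp (κ i * r)

theorem expDiag_neg_mul_expDiag [Fintype ι] (κ : ι → ℝ) (r : ℝ) :
    expDiag (-κ) r * expDiag κ r = 1 := by
  simp [expDiag, diagonal_mul_diagonal, ← Real.exp_add]

theorem expDiag_mul_expDiag_neg [Fintype ι] (κ : ι → ℝ) (r : ℝ) :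
    expDiag κ r * expDiag (-κ) r = 1 := by
  simpa using expDiag_neg_mul_expDiag (-κ) r

theorem transpose_expDiag (κ : ι → ℝ) (r : ℝ) : (expDiag κ r)ᵀ = expDiag κ r :=
  diagonal_transpose _

theorem isUnit_expDiag [Fintype ι] (κ : ι → ℝ) (r : ℝ) : IsUnit (expDiag κ r) :=
  isUnit_diagonal.mpr (Pi.isUnit_iff.mpr fun _ => (Real.exp_pos _).ne'.isUnit)

theorem expDiag_sumElim {κ : Type*} [DecidableEq κ] (a : ι → ℝ) (b : κ → ℝ) (r : ℝ) :
    expDiag (Sum.elim a b) r = fromBlocks (expDiag a r) 0 0 (expDiag b r) := by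
  rw [expDiag, expDiag, expDiag, fromBlocks_diagonal]
  congr 1
  ext (i | j) <;> rfl

theorem tendsto_expDiag_mul_mul_expDiag {κ : Type*} [Fintype ι] [Fintype κ] [DecidableEq κ]
    (a : ι → ℝ) (b : κ → ℝ) (X : Matrix ι κ ℝ) (h : ∀ i j, X i j = 0 ∨ a i + b j < 0) :
    Tendsto (fun r => expDiag a r * X * expDiag b r) atTop (𝓝 0) := by
  refine tendsto_pi_nhds.mpr fun i => tendsto_pi_nhds.mpr fun j => ?_
  have hentry : ∀ r, (expDiag a r * X * expDiag b r) i j = Real.exp ((a i + b j) * r) * X i j := by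
    intro r
    simp only [expDiag, diagonal_mul, mul_diagonal, add_mul, Real.exp_add]
    ring
  simp only [hentry, Matrix.zero_apply]
  rcases h i j with hX | hab
  · simp [hX]
  · simpa using ((Real.tendsto_exp_atBot.comp
      (tendsto_id.const_mul_atTop_of_neg hab)).mul_const (X i j))

theorem hasDerivAt_diagonal_mul_expDiag_add_apply [Fintype ι] {ι' : Type*} (p κ : ι → ℝ)
    (C D : Matrix ι ι' ℝ) (r : ℝ) (i : ι) (j : ι') :
    HasDerivAt (fun s => (diagonal p * (expDiag κ s * C + expDiag (-κ) s * D)) i j)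
      ((diagonal (p * κ) * (expDiag κ r * C - expDiag (-κ) r * D)) i j) r := by
  simp only [expDiag, diagonal_mul, Matrix.add_apply, Matrix.sub_apply, Pi.mul_apply, Pi.neg_apply]
  have hexp : ∀ k : ℝ, HasDerivAt (fun s => Real.exp (k * s)) (k * Real.exp (k * r)) r := by
    intro k
    simpa [mul_comm] using ((hasDerivAt_id r).const_mul k).exp
  exact ((((hexp (κ i)).mul_const (C i j)).add ((hexp (-κ i)).mul_const (D i j))).const_mul
    (p i)).congr_deriv (by ring)

end ExpDiag

section Canonical

variable {m n : Type*} [Fintype m] [Fintype n] [DecidableEq m] [DecidableEq n]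
  (κ' : m → ℝ) (κ'' : n → ℝ) (Q : Matrix n m ℝ) (X : Matrix m m ℝ)

-- `(e^{κr} C + c e^{-κr} D) e^{-κ_ε r}` in block form.
noncomputable def canonicalCore (c r : ℝ) : Matrix (m ⊕ n) (m ⊕ n) ℝ :=
  fromBlocks (1 + c • (expDiag (-κ') r * X * expDiag (-κ') r))
    (-c • (expDiag κ'' r * Q * expDiag (-κ') r)ᵀ)
    (expDiag κ'' r * Q * expDiag (-κ') r) (c • 1)

theorem expDiag_mul_add_smul_expDiag_neg_mul (c r : ℝ) :
    expDiag (Sum.elim κ' κ'') r * fromBlocks 1 0 Q 0 +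
        c • (expDiag (-Sum.elim κ' κ'') r * fromBlocks X (-Qᵀ) 0 1) =
      canonicalCore κ' κ'' Q X c r * expDiag (Sum.elim κ' (-κ'')) r := by
  rw [← Sum.elim_neg_neg, expDiag_sumElim, expDiag_sumElim, expDiag_sumElim, canonicalCore]
  simp only [fromBlocks_multiply, fromBlocks_smul, fromBlocks_add, transpose_mul,
    transpose_expDiag, Matrix.mul_assoc, expDiag_neg_mul_expDiag, expDiag_mul_expDiag_neg,
    Matrix.mul_zero, Matrix.zero_mul, Matrix.mul_one, Matrix.one_mul, add_zero, zero_add,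
    Matrix.add_mul, Matrix.smul_mul, Matrix.neg_mul, Matrix.mul_neg, smul_neg, neg_smul,
    smul_zero, neg_zero]

theorem tendsto_canonicalCore (hκ' : ∀ i, 0 < κ' i) (hQ : ∀ i j, Q j i = 0 ∨ κ'' j < κ' i)
    (c : ℝ) :
    Tendsto (canonicalCore κ' κ'' Q X c) atTop (𝓝 (fromBlocks 1 0 0 (c • 1))) := by
  have hY : Tendsto (fun r => expDiag (-κ') r * X * expDiag (-κ') r) atTop (𝓝 0) :=
    tendsto_expDiag_mul_mul_expDiag _ _ X fun i j => Or.inr <| by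
      simp only [Pi.neg_apply]; linarith [hκ' i, hκ' j]
  have hZ : Tendsto (fun r => expDiag κ'' r * Q * expDiag (-κ') r) atTop (𝓝 0) :=
    tendsto_expDiag_mul_mul_expDiag _ _ Q fun j i => (hQ i j).imp_right fun h => by
      simp only [Pi.neg_apply]; linarith
  have h := ((tendsto_const_nhds (x := (1 : Matrix m m ℝ))).add (hY.const_smul c)).matrix_fromBlocks
    (((continuous_id.matrix_transpose.tendsto _).comp hZ).const_smul (-c)) hZ
    (tendsto_const_nhds (x := c • (1 : Matrix n n ℝ)))
  simp only [smul_zero, add_zero, transpose_zero, id, Function.comp_def] at h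
  exact h

theorem diagonal_sqrt_mul_fromBlocks_mul_diagonal_sqrt (hκ' : ∀ i, 0 < κ' i)
    (hκ'' : ∀ j, 0 < κ'' j) :
    (diagonal fun i => √(Sum.elim κ' κ'' i)) * fromBlocks 1 0 0 ((-1 : ℝ) • 1) *
        (diagonal fun i => √(Sum.elim κ' κ'' i)) = diagonal (Sum.elim κ' (-κ'')) := by
  have hsign : fromBlocks (1 : Matrix m m ℝ) 0 0 ((-1 : ℝ) • (1 : Matrix n n ℝ)) =
      diagonal (Sum.elim (fun _ => 1) fun _ => -1) := by
    rw [← fromBlocks_diagonal, diagonal_one, ← diagonal_neg, diagonal_one, neg_one_smul]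
  rw [hsign, diagonal_mul_diagonal, diagonal_mul_diagonal]
  congr 1
  ext (i | j)
  · simp [Real.mul_self_sqrt (hκ' i).le]
  · simp [Real.mul_self_sqrt (hκ'' j).le]

end Canonical

theorem superpotential_asymptotics_canonical_general
    (N R : ℕ)
    (κ' : Fin R → ℝ) (κ'' : Fin (N - R) → ℝ)
    (hκ' : ∀ i, 0 < κ' i) (hκ'' : ∀ j, 0 < κ'' j)
    (Q₀ : Matrix (Fin (N - R)) (Fin R) ℝ)
    (hQ₀ : ∀ (i : Fin R) (j : Fin (N - R)), Q₀ j i = 0 ∨ κ'' j < κ' i)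
    (X₀ : Matrix (Fin R) (Fin R) ℝ) :
    let κv : Fin R ⊕ Fin (N - R) → ℝ := Sum.elim κ' κ''
    let C : Matrix (Fin R ⊕ Fin (N - R)) (Fin R ⊕ Fin (N - R)) ℝ :=
      fromBlocks 1 0 Q₀ 0
    let D : Matrix (Fin R ⊕ Fin (N - R)) (Fin R ⊕ Fin (N - R)) ℝ :=
      fromBlocks X₀ (-Q₀ᵀ) 0 1
    let σ : ℝ → Matrix (Fin R ⊕ Fin (N - R)) (Fin R ⊕ Fin (N - R)) ℝ := fun r =>
      diagonal (fun i => (Real.sqrt (κv i))⁻¹) *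
        (diagonal (fun i => Real.exp (κv i * r)) * C +
          diagonal (fun i => Real.exp (-(κv i) * r)) * D)
    let σd : ℝ → Matrix (Fin R ⊕ Fin (N - R)) (Fin R ⊕ Fin (N - R)) ℝ := fun r =>
      Matrix.of fun i j => deriv (fun s => σ s i j) r
    ∃ r₀ : ℝ, 0 ≤ r₀ ∧ (∀ r, r₀ ≤ r → IsUnit (σ r)) ∧
      Tendsto (fun r => σd r * (σ r)⁻¹) atTop
        (nhds (diagonal (Sum.elim κ' fun j => -κ'' j))) := by
  intro κv C D σ σd
  have hκv : ∀ i, 0 < κv i := by rintro (i | j) <;> [exact hκ' i; exact hκ'' j]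
  set P : Matrix _ _ ℝ := diagonal fun i => (Real.sqrt (κv i))⁻¹
  set M := canonicalCore κ' κ'' Q₀ X₀
  set A := expDiag (Sum.elim κ' (-κ''))
  have hσ : ∀ r, σ r = P * (M 1 r * A r) := fun r => by
    rw [← expDiag_mul_add_smul_expDiag_neg_mul, one_smul]
    rfl
  have hσd : ∀ r, σd r = diagonal (fun i => Real.sqrt (κv i)) * (M (-1) r * A r) := fun r => by
    have hsqrt : (fun i => Real.sqrt (κv i)) = (fun i => (Real.sqrt (κv i))⁻¹) * κv :=
      funext fun i => by simp [inv_mul_eq_div, Real.div_sqrt]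
    rw [hsqrt, ← expDiag_mul_add_smul_expDiag_neg_mul, neg_one_smul, ← sub_eq_add_neg]
    ext i j
    exact (hasDerivAt_diagonal_mul_expDiag_add_apply _ κv C D r i j).deriv
  have hPunit : IsUnit P :=
    isUnit_diagonal.mpr (Pi.isUnit_iff.mpr fun i => (Real.sqrt_pos.mpr (hκv i)).ne'.isUnit.inv)
  have hM : Tendsto (M 1) atTop (𝓝 1) := by
    simpa using tendsto_canonicalCore κ' κ'' Q₀ X₀ hκ' hQ₀ 1
  obtain ⟨r₁, hr₁⟩ := eventually_atTop.mp (eventually_isUnit_of_tendsto_one hM)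
  refine ⟨max r₁ 0, le_max_right _ _, fun r hr => ?_, ?_⟩
  · rw [hσ]
    exact hPunit.mul ((hr₁ r (le_of_max_le_left hr)).mul (isUnit_expDiag _ r))
  · simp only [hσ, hσd]
    convert tendsto_mul_inv_of_factorization hM (tendsto_canonicalCore κ' κ'' Q₀ X₀ hκ' hQ₀ (-1))
      (isUnit_expDiag _) using 2
    rw [inv_diagonal_inv fun i => (Real.sqrt_pos.mpr (hκv i)).ne']
    exact (diagonal_sqrt_mul_fromBlocks_mul_diagonal_sqrt κ' κ'' hκ' hκ'').symm

/-- Paper's main Theorem 2 (canonical form, zero initial potential): for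
`σ(r) = κ^{-1/2}(e^{κr}C + e^{-κr}D)` with `C = [[I,0],[Q₀,0]]`,
`D = [[X₀,-Q₀ᵀ],[0,I]]`, `X₀` symmetric and `(Q₀)_{ji} = 0` unless `κ''_j < κ'_i`,
the solution `σ(r)` is eventually invertible and the superpotential
`U(r) = σ'(r)σ(r)⁻¹` tends, as `r → ∞`, to `diag(κ'_1,…,κ'_R,-κ''_{R+1},…,-κ''_N)`. -/
theorem superpotential_asymptotics_canonical
    (N R : ℕ) (hN : 0 < N) (hR : R ≤ N)
    (κ' : Fin R → ℝ) (κ'' : Fin (N - R) → ℝ)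
    (hκ' : ∀ i, 0 < κ' i) (hκ'' : ∀ j, 0 < κ'' j)
    (Q₀ : Matrix (Fin (N - R)) (Fin R) ℝ)
    (hQ₀ : ∀ (i : Fin R) (j : Fin (N - R)), Q₀ j i = 0 ∨ κ'' j < κ' i)
    (X₀ : Matrix (Fin R) (Fin R) ℝ) (hX₀ : X₀.IsSymm) :
    let κv : Fin R ⊕ Fin (N - R) → ℝ := Sum.elim κ' κ''
    let C : Matrix (Fin R ⊕ Fin (N - R)) (Fin R ⊕ Fin (N - R)) ℝ :=
      fromBlocks 1 0 Q₀ 0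
    let D : Matrix (Fin R ⊕ Fin (N - R)) (Fin R ⊕ Fin (N - R)) ℝ :=
      fromBlocks X₀ (-Q₀ᵀ) 0 1
    let σ : ℝ → Matrix (Fin R ⊕ Fin (N - R)) (Fin R ⊕ Fin (N - R)) ℝ := fun r =>
      diagonal (fun i => (Real.sqrt (κv i))⁻¹) *
        (diagonal (fun i => Real.exp (κv i * r)) * C +
          diagonal (fun i => Real.exp (-(κv i) * r)) * D)
    let σd : ℝ → Matrix (Fin R ⊕ Fin (N - R)) (Fin R ⊕ Fin (N - R)) ℝ := fun r =>
      Matrix.of fun i j => deriv (fun s => σ s i j) r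
    ∃ r₀ : ℝ, 0 ≤ r₀ ∧ (∀ r, r₀ ≤ r → IsUnit (σ r)) ∧
      Tendsto (fun r => σd r * (σ r)⁻¹) atTop
        (nhds (diagonal (Sum.elim κ' fun j => -κ'' j))) :=
  superpotential_asymptotics_canonical_general N R κ' κ'' hκ' hκ'' Q₀ hQ₀ X₀
end

section
/- Let N be a positive integer, R ≤ N, and let C and D be real N×N matrices partitioned into blocks C = [[C₁₁,C₁₂],[C₂₁,C₂₂]], D = [[D₁₁,D₁₂],[D₂₁,D₂₂]] with C₁₁ of size R×R. Assume: (i) M := C₁₁ is invertible; (ii) C₂₂ = C₂₁M⁻¹C₁₂ (so C has rank R); (iii) DᵀC = CᵀD; (iv) the (N−R)×(N−R) matrix D₂₁M⁻¹C₁₂ − D₂₂ is invertible. Then, with Q₀ := C₂₁M⁻¹, there exist an invertible real N×N matrix T and a symmetric real R×R matrix X₀ such that CT = [[I,0],[Q₀,0]] and DT = [[X₀,−Q₀ᵀ],[0,I]], where the identity blocks are of sizes R×R and (N−R)×(N−R) respectively. -/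
/-!
Right multiplication by `T₁ = [[M⁻¹, -M⁻¹C₁₂], [0, I]]` brings `C` to `[[I, 0], [Q₀, 0]]`,
the rank condition being exactly what kills the lower-right block, and turns `D` into some
`[[A, B], [E, F]]` with `F = D₂₂ - D₂₁M⁻¹C₁₂` invertible. The relation `DᵀC = CᵀD` survives
right multiplication, and against the canonical form of `C` it says precisely that
`A + Q₀ᵀE` is symmetric and `B = -Q₀ᵀF`. A second factor `T₂ = [[I, 0], [-F⁻¹E, F⁻¹]]` then
clears the lower row of `DT₁` without touching `CT₁`, whose right block column vanishes.
-/

open Matrix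

namespace Matrix

variable {m n α : Type*} [Fintype m] [Fintype n]

theorem transpose_mul_comm_mul_right {k l p : Type*} [Fintype k] [Fintype l] [CommSemiring α]
    {C D : Matrix k l α} (h : Dᵀ * C = Cᵀ * D) (T : Matrix l p α) :
    (D * T)ᵀ * (C * T) = (C * T)ᵀ * (D * T) := by
  rw [transpose_mul, transpose_mul, Matrix.mul_assoc, Matrix.mul_assoc, ← Matrix.mul_assoc Dᵀ,
    ← Matrix.mul_assoc Cᵀ, h]

theorem mul_fromBlocks_zero₂₁_one [DecidableEq n] [Ring α] (D : Matrix (m ⊕ n) (m ⊕ n) α)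
    (P : Matrix m m α) (K : Matrix m n α) :
    D * fromBlocks P (-(P * K)) 0 1 =
      fromBlocks (D.toBlocks₁₁ * P) (D.toBlocks₁₂ - D.toBlocks₁₁ * P * K)
        (D.toBlocks₂₁ * P) (D.toBlocks₂₂ - D.toBlocks₂₁ * P * K) := by
  conv_lhs => rw [← fromBlocks_toBlocks D]
  simp only [fromBlocks_multiply, Matrix.mul_zero, Matrix.mul_one, Matrix.mul_neg, add_zero,
    Matrix.mul_assoc, neg_add_eq_sub]

variable [DecidableEq m] [CommRing α]

theorem isSymm_and_eq_neg_of_transpose_mul_fromBlocks {A : Matrix m m α} {B : Matrix m n α}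
    {E : Matrix n m α} {F : Matrix n n α} {Q : Matrix n m α}
    (h : (fromBlocks A B E F)ᵀ * fromBlocks 1 0 Q 0 = (fromBlocks 1 0 Q 0)ᵀ * fromBlocks A B E F) :
    (A + Qᵀ * E).IsSymm ∧ B = -(Qᵀ * F) := by
  simp only [fromBlocks_transpose, fromBlocks_multiply, fromBlocks_inj, transpose_one,
    transpose_zero, Matrix.mul_one, Matrix.one_mul, Matrix.mul_zero, Matrix.zero_mul,
    add_zero] at h
  obtain ⟨h₁₁, h₁₂, -, -⟩ := h
  refine ⟨?_, eq_neg_of_add_eq_zero_left h₁₂.symm⟩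
  rw [IsSymm, transpose_add, transpose_mul, transpose_transpose, h₁₁]

variable [DecidableEq n]

theorem mul_fromBlocks_nonsing_inv_eq_of_toBlocks₂₂_eq (C : Matrix (m ⊕ n) (m ⊕ n) α)
    (hM : IsUnit C.toBlocks₁₁)
    (hrank : C.toBlocks₂₂ = C.toBlocks₂₁ * C.toBlocks₁₁⁻¹ * C.toBlocks₁₂) :
    C * fromBlocks C.toBlocks₁₁⁻¹ (-(C.toBlocks₁₁⁻¹ * C.toBlocks₁₂)) 0 1 =
      fromBlocks 1 0 (C.toBlocks₂₁ * C.toBlocks₁₁⁻¹) 0 := by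
  rw [mul_fromBlocks_zero₂₁_one, mul_nonsing_inv _ ((isUnit_iff_isUnit_det _).mp hM),
    Matrix.one_mul, sub_self, ← hrank, sub_self]

theorem fromBlocks_mul_fromBlocks_nonsing_inv (A : Matrix m m α) (G : Matrix m n α)
    (E : Matrix n m α) {F : Matrix n n α} (hF : IsUnit F) :
    fromBlocks A (-(G * F)) E F * fromBlocks 1 0 (-(F⁻¹ * E)) F⁻¹ =
      fromBlocks (A + G * E) (-G) 0 1 := by
  have hFd := (isUnit_iff_isUnit_det F).mp hF
  simp only [fromBlocks_multiply, Matrix.mul_one, Matrix.mul_zero, zero_add, Matrix.mul_neg,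
    Matrix.neg_mul, neg_neg, Matrix.mul_assoc, mul_nonsing_inv_cancel_left _ _ hFd,
    mul_nonsing_inv _ hFd, add_neg_cancel]

end Matrix

theorem lemma1_canonical_forms_general
    (N R : ℕ)
    (C D : Matrix (Fin R ⊕ Fin (N - R)) (Fin R ⊕ Fin (N - R)) ℝ)
    (hM : IsUnit C.toBlocks₁₁)
    (hrank : C.toBlocks₂₂ = C.toBlocks₂₁ * (C.toBlocks₁₁)⁻¹ * C.toBlocks₁₂)
    (hsym : Dᵀ * C = Cᵀ * D)
    (hns : IsUnit (D.toBlocks₂₁ * (C.toBlocks₁₁)⁻¹ * C.toBlocks₁₂ - D.toBlocks₂₂)) :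
    ∃ (T : Matrix (Fin R ⊕ Fin (N - R)) (Fin R ⊕ Fin (N - R)) ℝ)
      (X₀ : Matrix (Fin R) (Fin R) ℝ),
      IsUnit T ∧ X₀.IsSymm ∧
      C * T = fromBlocks 1 0 (C.toBlocks₂₁ * (C.toBlocks₁₁)⁻¹) 0 ∧
      D * T = fromBlocks X₀ (-(C.toBlocks₂₁ * (C.toBlocks₁₁)⁻¹)ᵀ) 0 1 := by
  set M := C.toBlocks₁₁
  set E := D.toBlocks₂₁ * M⁻¹
  set F := D.toBlocks₂₂ - D.toBlocks₂₁ * M⁻¹ * C.toBlocks₁₂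
  have hF : IsUnit F := by simpa only [F, neg_sub] using hns.neg
  set T₁ := fromBlocks M⁻¹ (-(M⁻¹ * C.toBlocks₁₂)) 0 (1 : Matrix (Fin (N - R)) _ ℝ)
  set T₂ := fromBlocks (1 : Matrix (Fin R) (Fin R) ℝ) 0 (-(F⁻¹ * E)) F⁻¹
  have hCT₁ : C * T₁ = fromBlocks 1 0 (C.toBlocks₂₁ * M⁻¹) 0 :=
    mul_fromBlocks_nonsing_inv_eq_of_toBlocks₂₂_eq C hM hrank
  have hDT₁ : D * T₁ = fromBlocks (D.toBlocks₁₁ * M⁻¹)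
      (D.toBlocks₁₂ - D.toBlocks₁₁ * M⁻¹ * C.toBlocks₁₂) E F :=
    mul_fromBlocks_zero₂₁_one D _ _
  have hsym₁ := transpose_mul_comm_mul_right hsym T₁
  rw [hCT₁, hDT₁] at hsym₁
  obtain ⟨hX₀, hB⟩ := isSymm_and_eq_neg_of_transpose_mul_fromBlocks hsym₁
  refine ⟨T₁ * T₂, _, ?_, hX₀, ?_, ?_⟩
  · exact (isUnit_fromBlocks_zero₂₁.mpr ⟨isUnit_nonsing_inv_iff.mpr hM, isUnit_one⟩).mul
      (isUnit_fromBlocks_zero₁₂.mpr ⟨isUnit_one, isUnit_nonsing_inv_iff.mpr hF⟩)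
  · rw [← Matrix.mul_assoc, hCT₁]
    simp [T₂, fromBlocks_multiply]
  · rw [← Matrix.mul_assoc, hDT₁, hB, fromBlocks_mul_fromBlocks_nonsing_inv _ _ _ hF]

/-- Paper's Lemma 1: matrices `C` (of rank `R`, with invertible upper-left block `M`)
and `D` satisfying the symmetry condition `DᵀC = CᵀD` and the nonsingularity condition
`D₂₁M⁻¹C₁₂ - D₂₂` invertible can be brought, by right multiplication with a single
invertible matrix `T`, to canonical forms `CT = [[I,0],[Q₀,0]]`,
`DT = [[X₀,-Q₀ᵀ],[0,I]]` with `Q₀ = C₂₁M⁻¹` and `X₀` symmetric. -/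
theorem lemma1_canonical_forms
    (N R : ℕ) (hN : 0 < N) (hR : R ≤ N)
    (C D : Matrix (Fin R ⊕ Fin (N - R)) (Fin R ⊕ Fin (N - R)) ℝ)
    (hM : IsUnit C.toBlocks₁₁)
    (hrank : C.toBlocks₂₂ = C.toBlocks₂₁ * (C.toBlocks₁₁)⁻¹ * C.toBlocks₁₂)
    (hsym : Dᵀ * C = Cᵀ * D)
    (hns : IsUnit (D.toBlocks₂₁ * (C.toBlocks₁₁)⁻¹ * C.toBlocks₁₂ - D.toBlocks₂₂)) :
    ∃ (T : Matrix (Fin R ⊕ Fin (N - R)) (Fin R ⊕ Fin (N - R)) ℝ)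
      (X₀ : Matrix (Fin R) (Fin R) ℝ),
      IsUnit T ∧ X₀.IsSymm ∧
      C * T = fromBlocks 1 0 (C.toBlocks₂₁ * (C.toBlocks₁₁)⁻¹) 0 ∧
      D * T = fromBlocks X₀ (-(C.toBlocks₂₁ * (C.toBlocks₁₁)⁻¹)ᵀ) 0 1 :=
  lemma1_canonical_forms_general N R C D hM hrank hsym hns
end

section
/- Let n be a positive integer, A : ℝ → (n×n real matrices) a matrix-valued function, ℰ and E real numbers. Let σ : ℝ → (n×n real matrices) be twice differentiable with σ(r) invertible for all r and σ''(r) = (A(r) − ℰ·I)σ(r), and set U(r) = σ'(r)σ(r)⁻¹. If ψ : ℝ → (n×n real matrices, or n-component real vectors) is twice differentiable and satisfies ψ''(r) = (A(r) − E·I)ψ(r), then the transformed function ψ̃(r) := −ψ'(r) + U(r)ψ(r) satisfies ψ̃''(r) = (A(r) − 2U'(r) − E·I)ψ̃(r). -/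
open Matrix

/-!
With `U = σ'σ⁻¹`, the equation `σ'' = (A - ℰ)σ` is equivalent to the Riccati equation
`U' = A - ℰ - U²`, i.e. to the factorization `H - ℰ = A⁺A⁻` with `A^± = ±d/dr + U`.
Hence `ψ̃ = A⁻ψ` satisfies `A⁺ψ̃ = (E - ℰ)ψ`, and applying `A⁻` once more gives
`A⁻A⁺ψ̃ = (E - ℰ)ψ̃`; since `A⁻A⁺ = H - 2U' - ℰ`, this is the claim.
-/

section NormedAlgebra

variable {𝕜 R : Type*} [NontriviallyNormedField 𝕜] [NormedRing R] [NormedAlgebra 𝕜 R]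

theorem HasDerivAt.ringInverse [HasSummableGeomSeries R] {f : 𝕜 → R} {f' : R} {x : 𝕜}
    (hf : HasDerivAt f f' x) (hx : IsUnit (f x)) :
    HasDerivAt (fun s => Ring.inverse (f s))
      (-(Ring.inverse (f x) * f' * Ring.inverse (f x))) x := by
  obtain ⟨u, hu⟩ := hx
  have h := (hu ▸ hasFDerivAt_ringInverse (𝕜 := 𝕜) u).comp_hasDerivAt x hf
  simpa [Function.comp_def, ← hu, mul_assoc] using h

noncomputable def superpotential (σ σ' : 𝕜 → R) (r : 𝕜) : R :=
  σ' r * Ring.inverse (σ r)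

theorem hasDerivAt_superpotential [HasSummableGeomSeries R] {σ σ' : 𝕜 → R} {W : R} {r : 𝕜}
    (hσ : HasDerivAt σ (σ' r) r) (hσ' : HasDerivAt σ' (W * σ r) r) (hσr : IsUnit (σ r)) :
    HasDerivAt (superpotential σ σ') (W - superpotential σ σ' r ^ 2) r := by
  refine (hσ'.mul (hσ.ringInverse hσr)).congr_deriv ?_
  simp only [superpotential, sq, mul_neg, mul_assoc, Ring.mul_inverse_cancel _ hσr, mul_one]
  abel

def darbouxTransform (U ψ ψ' : 𝕜 → R) (r : 𝕜) : R :=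
  -ψ' r + U r * ψ r

variable {A U ψ ψ' : 𝕜 → R} {ℰ E : 𝕜}

theorem hasDerivAt_darbouxTransform {r : 𝕜}
    (hU : HasDerivAt U (A r - ℰ • 1 - U r ^ 2) r) (hψ : HasDerivAt ψ (ψ' r) r)
    (hψ' : HasDerivAt ψ' ((A r - E • 1) * ψ r) r) :
    HasDerivAt (darbouxTransform U ψ ψ')
      ((E - ℰ) • ψ r - U r * darbouxTransform U ψ ψ' r) r := by
  refine (hψ'.neg.add (hU.mul hψ)).congr_deriv ?_
  simp only [darbouxTransform, sq, sub_mul, smul_mul_assoc, one_mul, mul_add, mul_neg,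
    sub_smul, mul_assoc]
  abel

theorem hasDerivAt_deriv_darbouxTransform
    (hU : ∀ s, HasDerivAt U (A s - ℰ • 1 - U s ^ 2) s) (hψ : ∀ s, HasDerivAt ψ (ψ' s) s)
    (hψ' : ∀ s, HasDerivAt ψ' ((A s - E • 1) * ψ s) s) (r : 𝕜) :
    HasDerivAt (deriv (darbouxTransform U ψ ψ'))
      ((A r - (2 : 𝕜) • deriv U r - E • 1) * darbouxTransform U ψ ψ' r) r := by
  set ψt := darbouxTransform U ψ ψ'
  have hψt s := hasDerivAt_darbouxTransform (hU s) (hψ s) (hψ' s)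
  have hderiv : deriv ψt = fun s => (E - ℰ) • ψ s - U s * ψt s :=
    funext fun s => (hψt s).deriv
  rw [hderiv]
  refine (((hψ r).const_smul (E - ℰ)).sub ((hU r).mul (hψt r))).congr_deriv ?_
  have hψ'r : ψ' r = U r * ψ r - ψt r := by simp only [ψt, darbouxTransform]; abel
  rw [(hU r).deriv, hψ'r]
  simp only [sq, sub_mul, smul_mul_assoc, one_mul, mul_sub, mul_smul_comm, mul_assoc,
    smul_sub, smul_smul]
  module

end NormedAlgebra

theorem Matrix.hasDerivAt_iff_forall_apply {𝕜 m n : Type*} [NontriviallyNormedField 𝕜]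
    [Fintype n] {M : 𝕜 → Matrix m n 𝕜} {M' : Matrix m n 𝕜} {r : 𝕜} :
    HasDerivAt M M' r ↔ ∀ i j, HasDerivAt (fun s => M s i j) (M' i j) r :=
  (hasDerivAt_pi (φ := fun s i => M s i) (φ' := fun i => M' i)).trans
    (forall_congr' fun _ => hasDerivAt_pi)

-- Any matrix norm would do: the statement only sees the product topology.
attribute [local instance] Matrix.linftyOpNormedAddCommGroup Matrix.linftyOpNormedRing
  Matrix.linftyOpNormedAlgebra

theorem multichannel_susy_transformation_general
    (n : ℕ)
    (A : ℝ → Matrix (Fin n) (Fin n) ℝ) (ℰ E : ℝ)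
    (σ σd σdd : ℝ → Matrix (Fin n) (Fin n) ℝ)
    (hσ : ∀ r i j, HasDerivAt (fun s => σ s i j) (σd r i j) r)
    (hσd : ∀ r i j, HasDerivAt (fun s => σd s i j) (σdd r i j) r)
    (hσinv : ∀ r, IsUnit (σ r))
    (hσeq : ∀ r, σdd r = (A r - ℰ • (1 : Matrix (Fin n) (Fin n) ℝ)) * σ r)
    (ψ ψd ψdd : ℝ → Matrix (Fin n) (Fin n) ℝ)
    (hψ : ∀ r i j, HasDerivAt (fun s => ψ s i j) (ψd r i j) r)
    (hψd : ∀ r i j, HasDerivAt (fun s => ψd s i j) (ψdd r i j) r)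
    (hψeq : ∀ r, ψdd r = (A r - E • (1 : Matrix (Fin n) (Fin n) ℝ)) * ψ r) :
    let U : ℝ → Matrix (Fin n) (Fin n) ℝ := fun r => σd r * (σ r)⁻¹
    let Ud : ℝ → Matrix (Fin n) (Fin n) ℝ := fun r =>
      Matrix.of fun i j => deriv (fun s => U s i j) r
    let ψt : ℝ → Matrix (Fin n) (Fin n) ℝ := fun r => -ψd r + U r * ψ r
    ∀ (r : ℝ) (i j : Fin n),
      deriv (fun t => deriv (fun s => ψt s i j) t) r
        = ((A r - (2 : ℝ) • Ud r - E • (1 : Matrix (Fin n) (Fin n) ℝ)) * ψt r) i j := by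
  intro U Ud ψt r i j
  have hσ' s := Matrix.hasDerivAt_iff_forall_apply.2 (hσ s)
  have hσd' s := hσeq s ▸ Matrix.hasDerivAt_iff_forall_apply.2 (hσd s)
  have hψ' s := Matrix.hasDerivAt_iff_forall_apply.2 (hψ s)
  have hψd' s := hψeq s ▸ Matrix.hasDerivAt_iff_forall_apply.2 (hψd s)
  have hU_eq : U = superpotential σ σd :=
    funext fun s => by rw [superpotential, ← nonsing_inv_eq_ringInverse]
  have hU s : HasDerivAt U (A s - ℰ • 1 - U s ^ 2) s :=
    hU_eq ▸ hasDerivAt_superpotential (hσ' s) (hσd' s) (hσinv s)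
  have hψt s : HasDerivAt ψt _ s := hasDerivAt_darbouxTransform (hU s) (hψ' s) (hψd' s)
  have hψt' : HasDerivAt (deriv ψt) _ r := hasDerivAt_deriv_darbouxTransform hU hψ' hψd' r
  rw [(hU r).deriv] at hψt'
  have hUd : Ud r = A r - ℰ • 1 - U r ^ 2 := by
    ext k l
    exact (Matrix.hasDerivAt_iff_forall_apply.1 (hU r) k l).deriv
  have hinner : (fun t => deriv (fun s => ψt s i j) t) = fun t => deriv ψt t i j :=
    funext fun t => (Matrix.hasDerivAt_iff_forall_apply.1
      (hψt t).differentiableAt.hasDerivAt i j).deriv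
  rw [hinner, (Matrix.hasDerivAt_iff_forall_apply.1 hψt' i j).deriv, hUd]
  rfl

/-- The fundamental multichannel SUSY (matrix Darboux) transformation: if
`σ'' = (A - ℰ)σ` with `σ(r)` invertible, `U = σ'σ⁻¹`, and `ψ'' = (A - E)ψ`, then
`ψ̃ = -ψ' + Uψ` satisfies `ψ̃'' = (A - 2U' - E)ψ̃`. -/
theorem multichannel_susy_transformation
    (n : ℕ) (hn : 0 < n)
    (A : ℝ → Matrix (Fin n) (Fin n) ℝ) (ℰ E : ℝ)
    (σ σd σdd : ℝ → Matrix (Fin n) (Fin n) ℝ)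
    (hσ : ∀ r i j, HasDerivAt (fun s => σ s i j) (σd r i j) r)
    (hσd : ∀ r i j, HasDerivAt (fun s => σd s i j) (σdd r i j) r)
    (hσinv : ∀ r, IsUnit (σ r))
    (hσeq : ∀ r, σdd r = (A r - ℰ • (1 : Matrix (Fin n) (Fin n) ℝ)) * σ r)
    (ψ ψd ψdd : ℝ → Matrix (Fin n) (Fin n) ℝ)
    (hψ : ∀ r i j, HasDerivAt (fun s => ψ s i j) (ψd r i j) r)
    (hψd : ∀ r i j, HasDerivAt (fun s => ψd s i j) (ψdd r i j) r)
    (hψeq : ∀ r, ψdd r = (A r - E • (1 : Matrix (Fin n) (Fin n) ℝ)) * ψ r) :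
    let U : ℝ → Matrix (Fin n) (Fin n) ℝ := fun r => σd r * (σ r)⁻¹
    let Ud : ℝ → Matrix (Fin n) (Fin n) ℝ := fun r =>
      Matrix.of fun i j => deriv (fun s => U s i j) r
    let ψt : ℝ → Matrix (Fin n) (Fin n) ℝ := fun r => -ψd r + U r * ψ r
    ∀ (r : ℝ) (i j : Fin n),
      deriv (fun t => deriv (fun s => ψt s i j) t) r
        = ((A r - (2 : ℝ) • Ud r - E • (1 : Matrix (Fin n) (Fin n) ℝ)) * ψt r) i j :=
  multichannel_susy_transformation_general n A ℰ E σ σd σdd hσ hσd hσinv hσeq ψ ψd ψdd hψ hψd hψeq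
end

section
/- Let n be a positive integer, A : ℝ → (n×n real matrices) with A(r) symmetric for all r, and ℰ a real number. Let σ : ℝ → (n×n real matrices) be twice differentiable with σ(r) invertible for all r, σ''(r) = (A(r) − ℰ·I)σ(r), and σ(r)ᵀσ'(r) = σ'(r)ᵀσ(r) for all r (vanishing self-Wronskian). Set U(r) = σ'(r)σ(r)⁻¹. Then the function φ̃(r) := (σ(r)ᵀ)⁻¹ satisfies φ̃''(r) = (A(r) − 2U'(r) − ℰ·I)φ̃(r). -/
/-!
With `U = σ'σ⁻¹`, the vanishing self-Wronskian says exactly that `U` is symmetric, so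
`φ̃ = (σᵀ)⁻¹` satisfies `φ̃' = -(σᵀ)⁻¹σ'ᵀ(σᵀ)⁻¹ = -Uᵀφ̃ = -Uφ̃`. The equation `σ'' = (A - ℰ)σ`
becomes the Riccati equation `U' + U² = A - ℰ`, and differentiating once more gives
`φ̃'' = (U² - U')φ̃ = (A - ℰ - 2U')φ̃`.
-/

open Matrix

theorem isSymm_mul_inv_of_transpose_mul_eq {R n : Type*} [CommRing R] [Fintype n] [DecidableEq n]
    {S D : Matrix n n R} (hS : IsUnit S) (h : Sᵀ * D = Dᵀ * S) : (D * S⁻¹).IsSymm := by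
  have hdet : IsUnit S.det := (isUnit_iff_isUnit_det S).1 hS
  have hdetT : IsUnit Sᵀ.det := by rwa [det_transpose]
  calc (D * S⁻¹)ᵀ = Sᵀ⁻¹ * (Dᵀ * S * S⁻¹) := by
        rw [transpose_mul, transpose_nonsing_inv, mul_nonsing_inv_cancel_right _ _ hdet]
    _ = D * S⁻¹ := by rw [← h, Matrix.mul_assoc, nonsing_inv_mul_cancel_left _ _ hdetT]

section MatrixCalculus

/- Every norm on matrices induces the product topology used by `HasDerivAt`; the `L∞` operator
norm is chosen because it makes matrices a normed algebra, as the product rule and the derivative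
of `Ring.inverse` require. -/
attribute [local instance] Matrix.linftyOpNormedAddCommGroup Matrix.linftyOpNormedSpace
  Matrix.linftyOpNormedRing Matrix.linftyOpNormedAlgebra

variable {𝕜 : Type*} [RCLike 𝕜] {m n : Type*} [Fintype m] [Fintype n] [DecidableEq m]
  [DecidableEq n] {x : 𝕜}

theorem hasDerivAt_matrix_iff {M : 𝕜 → Matrix m n 𝕜} {M' : Matrix m n 𝕜} :
    HasDerivAt M M' x ↔ ∀ i j, HasDerivAt (fun s => M s i j) (M' i j) x := by
  refine ⟨fun h i j => ?_, fun h => ?_⟩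
  · exact ((entryLinearMap 𝕜 𝕜 i j).toContinuousLinearMap.hasFDerivAt).comp_hasDerivAt x h
  · have hsum : HasDerivAt (fun s => ∑ i, ∑ j, M s i j • single i j (1 : 𝕜))
        (∑ i, ∑ j, M' i j • single i j (1 : 𝕜)) x :=
      .fun_sum fun i _ => .fun_sum fun j _ => (h i j).smul_const _
    simpa only [smul_single, smul_eq_mul, mul_one, ← matrix_eq_sum_single] using hsum

theorem HasDerivAt.matrix_transpose {M : 𝕜 → Matrix m n 𝕜} {M' : Matrix m n 𝕜}
    (h : HasDerivAt M M' x) : HasDerivAt (fun s => (M s)ᵀ) M'ᵀ x :=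
  hasDerivAt_matrix_iff.2 fun i j => hasDerivAt_matrix_iff.1 h j i

theorem HasDerivAt.matrix_mul {M N : 𝕜 → Matrix n n 𝕜} {M' N' : Matrix n n 𝕜}
    (hM : HasDerivAt M M' x) (hN : HasDerivAt N N' x) :
    HasDerivAt (fun s => M s * N s) (M' * N x + M x * N') x :=
  hM.fun_mul hN

theorem HasDerivAt.matrix_inv {M : 𝕜 → Matrix n n 𝕜} {M' : Matrix n n 𝕜}
    (h : HasDerivAt M M' x) (hx : IsUnit (M x)) :
    HasDerivAt (fun s => (M s)⁻¹) (-((M x)⁻¹ * M' * (M x)⁻¹)) x := by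
  obtain ⟨u, hu⟩ := hx
  have hinv : HasFDerivAt Ring.inverse _ (M x) := hu ▸ hasFDerivAt_ringInverse (𝕜 := 𝕜) u
  rw [← hu]
  have := hinv.comp_hasDerivAt x h
  simp only [Function.comp_def, ← nonsing_inv_eq_ringInverse, coe_units_inv] at this
  exact this

theorem HasDerivAt.mul_inv_riccati {σ σ' : 𝕜 → Matrix n n 𝕜} {σ'' B : Matrix n n 𝕜}
    (hσ : HasDerivAt σ (σ' x) x) (hσ' : HasDerivAt σ' σ'' x) (hunit : IsUnit (σ x))
    (hσ'' : σ'' = B * σ x) :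
    HasDerivAt (fun s => σ' s * (σ s)⁻¹) (B - σ' x * (σ x)⁻¹ * (σ' x * (σ x)⁻¹)) x := by
  convert hσ'.matrix_mul (hσ.matrix_inv hunit) using 1
  rw [hσ'', mul_nonsing_inv_cancel_right _ _ ((isUnit_iff_isUnit_det _).1 hunit), mul_neg,
    sub_eq_add_neg]
  simp only [Matrix.mul_assoc]

theorem HasDerivAt.inv_transpose_of_transpose_mul_eq {σ : 𝕜 → Matrix n n 𝕜} {σ' : Matrix n n 𝕜}
    (hσ : HasDerivAt σ σ' x) (hunit : IsUnit (σ x)) (hW : (σ x)ᵀ * σ' = σ'ᵀ * σ x) :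
    HasDerivAt (fun s => (σ s)ᵀ⁻¹) (-(σ' * (σ x)⁻¹ * (σ x)ᵀ⁻¹)) x := by
  have hU : (σ x)ᵀ⁻¹ * σ'ᵀ = σ' * (σ x)⁻¹ := by
    rw [← (isSymm_mul_inv_of_transpose_mul_eq hunit hW).eq, transpose_mul, transpose_nonsing_inv]
  simpa only [hU] using hσ.matrix_transpose.matrix_inv ((isUnit_transpose _).2 hunit)

theorem hasDerivAt_neg_mul_of_riccati {U φ : 𝕜 → Matrix n n 𝕜} {U' B : Matrix n n 𝕜}
    (hU : HasDerivAt U U' x) (hriccati : U' = B - U x * U x)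
    (hφ : HasDerivAt φ (-(U x * φ x)) x) :
    HasDerivAt (fun s => -(U s * φ s)) ((B - (2 : 𝕜) • U') * φ x) x := by
  obtain rfl : B = U' + U x * U x := by rw [hriccati]; abel
  have hφ'' : (U' + U x * U x - (2 : 𝕜) • U') * φ x = -(U' * φ x + U x * -(U x * φ x)) := by
    simp only [two_smul, Matrix.add_mul, Matrix.sub_mul, Matrix.mul_neg, Matrix.mul_assoc]
    abel
  rw [hφ'']
  exact (hU.matrix_mul hφ).fun_neg

end MatrixCalculus

theorem inverse_transpose_solves_transformed_equation_general
    (n : ℕ)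
    (A : ℝ → Matrix (Fin n) (Fin n) ℝ) (ℰ : ℝ)
    (σ σd σdd : ℝ → Matrix (Fin n) (Fin n) ℝ)
    (hσ : ∀ r i j, HasDerivAt (fun s => σ s i j) (σd r i j) r)
    (hσd : ∀ r i j, HasDerivAt (fun s => σd s i j) (σdd r i j) r)
    (hσinv : ∀ r, IsUnit (σ r))
    (hσeq : ∀ r, σdd r = (A r - ℰ • (1 : Matrix (Fin n) (Fin n) ℝ)) * σ r)
    (hwronsk : ∀ r, (σ r)ᵀ * σd r = (σd r)ᵀ * σ r) :
    let U : ℝ → Matrix (Fin n) (Fin n) ℝ := fun r => σd r * (σ r)⁻¹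
    let Ud : ℝ → Matrix (Fin n) (Fin n) ℝ := fun r =>
      Matrix.of fun i j => deriv (fun s => U s i j) r
    let φt : ℝ → Matrix (Fin n) (Fin n) ℝ := fun r => ((σ r)ᵀ)⁻¹
    ∀ (r : ℝ) (i j : Fin n),
      deriv (fun t => deriv (fun s => φt s i j) t) r
        = ((A r - (2 : ℝ) • Ud r - ℰ • (1 : Matrix (Fin n) (Fin n) ℝ)) * φt r) i j := by
  intro U Ud φt r i j
  have hσ' : ∀ t, HasDerivAt σ (σd t) t := fun t => hasDerivAt_matrix_iff.2 (hσ t)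
  have hU : ∀ t, HasDerivAt U (A t - ℰ • 1 - U t * U t) t := fun t =>
    (hσ' t).mul_inv_riccati (hasDerivAt_matrix_iff.2 (hσd t)) (hσinv t) (hσeq t)
  have hUd : Ud r = A r - ℰ • 1 - U r * U r := by
    ext a b
    exact (hasDerivAt_matrix_iff.1 (hU r) a b).deriv
  have hφ : ∀ t, HasDerivAt φt (-(U t * φt t)) t := fun t =>
    (hσ' t).inv_transpose_of_transpose_mul_eq (hσinv t) (hwronsk t)
  have hφ' : deriv (fun s => φt s i j) = fun t => (-(U t * φt t)) i j :=
    funext fun t => (hasDerivAt_matrix_iff.1 (hφ t) i j).deriv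
  rw [hφ', (hasDerivAt_matrix_iff.1 (hasDerivAt_neg_mul_of_riccati (hU r) rfl (hφ r)) i j).deriv,
    hUd, sub_right_comm]

/-- Paper's equation (13): if `σ'' = (A - ℰ)σ` with `σ(r)` invertible, `A(r)` symmetric
and the self-Wronskian `σᵀσ' - σ'ᵀσ` vanishes, then `φ̃ = (σᵀ)⁻¹` solves the
transformed equation `φ̃'' = (A - 2U' - ℰ)φ̃`, where `U = σ'σ⁻¹`. -/
theorem inverse_transpose_solves_transformed_equation
    (n : ℕ) (hn : 0 < n)
    (A : ℝ → Matrix (Fin n) (Fin n) ℝ) (ℰ : ℝ)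
    (hA : ∀ r, (A r).IsSymm)
    (σ σd σdd : ℝ → Matrix (Fin n) (Fin n) ℝ)
    (hσ : ∀ r i j, HasDerivAt (fun s => σ s i j) (σd r i j) r)
    (hσd : ∀ r i j, HasDerivAt (fun s => σd s i j) (σdd r i j) r)
    (hσinv : ∀ r, IsUnit (σ r))
    (hσeq : ∀ r, σdd r = (A r - ℰ • (1 : Matrix (Fin n) (Fin n) ℝ)) * σ r)
    (hwronsk : ∀ r, (σ r)ᵀ * σd r = (σd r)ᵀ * σ r) :
    let U : ℝ → Matrix (Fin n) (Fin n) ℝ := fun r => σd r * (σ r)⁻¹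
    let Ud : ℝ → Matrix (Fin n) (Fin n) ℝ := fun r =>
      Matrix.of fun i j => deriv (fun s => U s i j) r
    let φt : ℝ → Matrix (Fin n) (Fin n) ℝ := fun r => ((σ r)ᵀ)⁻¹
    ∀ (r : ℝ) (i j : Fin n),
      deriv (fun t => deriv (fun s => φt s i j) t) r
        = ((A r - (2 : ℝ) • Ud r - ℰ • (1 : Matrix (Fin n) (Fin n) ℝ)) * φt r) i j :=
  inverse_transpose_solves_transformed_equation_general n A ℰ σ σd σdd hσ hσd hσinv hσeq hwronsk
end

section
/- Let n be a positive integer, A : ℝ → (n×n real matrices) with A(r) symmetric for all r, and ℰ a real number. Let σ : ℝ → (n×n real matrices) be twice differentiable with σ(r) invertible for all r, σ''(r) = (A(r) − ℰ·I)σ(r), and σ(r)ᵀσ'(r) = σ'(r)ᵀσ(r) for all r. Fix r₀ ∈ ℝ and define ψ̃(r) := (σ(r)ᵀ)⁻¹ ∫_{r₀}^{r} σ(s)ᵀσ(s) ds and φ̃(r) := (σ(r)ᵀ)⁻¹. Then ψ̃''(r) = (A(r) − 2U'(r) − ℰ·I)ψ̃(r), where U = σ'σ⁻¹, and the Wronskian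 W[φ̃,ψ̃](r) := φ̃(r)ᵀψ̃'(r) − φ̃'(r)ᵀψ̃(r) is constant and equal to the identity matrix (equivalently, W[ψ̃,φ̃] ≡ −I). -/
/-! With `U = σ' σ⁻¹`, the condition `σᵀσ' = σ'ᵀσ` says exactly that `U` is symmetric,
hence `φ̃ = (σᵀ)⁻¹` satisfies `φ̃' = -U φ̃`, and the product rule gives `ψ̃' = σ - U ψ̃`.
Differentiating once more, `U σ = σ'` and the Riccati equation `U' = (A - ℰ) - U²` give
`ψ̃'' = (U² - U') ψ̃ = (A - ℰ - 2U') ψ̃`. In `W[φ̃, ψ̃] = φ̃ᵀ(σ - U ψ̃) + φ̃ᵀ Uᵀ ψ̃` the `U`-terms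
cancel by symmetry, leaving `φ̃ᵀ σ = σ⁻¹ σ = 1`. -/

open Matrix Filter Topology

variable {m n p : Type*}

def HasEntrywiseDerivAt (f : ℝ → Matrix m n ℝ) (f' : Matrix m n ℝ) (x : ℝ) : Prop :=
  ∀ i j, HasDerivAt (fun s => f s i j) (f' i j) x

noncomputable def entrywiseDeriv (f : ℝ → Matrix m n ℝ) (x : ℝ) : Matrix m n ℝ :=
  Matrix.of fun i j => deriv (fun s => f s i j) x

noncomputable def wronskian [Fintype m] (ψ₁ : ℝ → Matrix m n ℝ) (ψ₂ : ℝ → Matrix m p ℝ) (x : ℝ) :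
    Matrix n p ℝ :=
  (ψ₁ x)ᵀ * entrywiseDeriv ψ₂ x - (entrywiseDeriv ψ₁ x)ᵀ * ψ₂ x

theorem wronskian_swap [Fintype m] (ψ₁ : ℝ → Matrix m n ℝ) (ψ₂ : ℝ → Matrix m p ℝ) (x : ℝ) :
    wronskian ψ₂ ψ₁ x = -(wronskian ψ₁ ψ₂ x)ᵀ := by
  simp only [wronskian, transpose_sub, transpose_mul, transpose_transpose, neg_sub]

namespace HasEntrywiseDerivAt

variable {x : ℝ}

theorem entrywiseDeriv_eq {f : ℝ → Matrix m n ℝ} {f' : Matrix m n ℝ}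
    (hf : HasEntrywiseDerivAt f f' x) : entrywiseDeriv f x = f' :=
  Matrix.ext fun i j => (hf i j).deriv

theorem sub {f g : ℝ → Matrix m n ℝ} {f' g' : Matrix m n ℝ} (hf : HasEntrywiseDerivAt f f' x)
    (hg : HasEntrywiseDerivAt g g' x) : HasEntrywiseDerivAt (fun s => f s - g s) (f' - g') x :=
  fun i j => (hf i j).sub (hg i j)

theorem transpose {f : ℝ → Matrix m n ℝ} {f' : Matrix m n ℝ} (hf : HasEntrywiseDerivAt f f' x) :
    HasEntrywiseDerivAt (fun s => (f s)ᵀ) f'ᵀ x :=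
  fun i j => hf j i

theorem mul [Fintype n] {f : ℝ → Matrix m n ℝ} {g : ℝ → Matrix n p ℝ} {f' : Matrix m n ℝ}
    {g' : Matrix n p ℝ} (hf : HasEntrywiseDerivAt f f' x) (hg : HasEntrywiseDerivAt g g' x) :
    HasEntrywiseDerivAt (fun s => f s * g s) (f' * g x + f x * g') x := by
  intro i j
  simp only [mul_apply, Matrix.add_apply, ← Finset.sum_add_distrib]
  exact HasDerivAt.fun_sum fun k _ => (hf i k).mul (hg k j)

theorem continuous {f f' : ℝ → Matrix m n ℝ} (hf : ∀ x, HasEntrywiseDerivAt f (f' x) x) :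
    Continuous f :=
  continuous_pi fun i => continuous_pi fun j =>
    continuous_iff_continuousAt.2 fun x => (hf x i j).continuousAt

end HasEntrywiseDerivAt

theorem hasEntrywiseDerivAt_integral {g : ℝ → Matrix m n ℝ} (hg : Continuous g) (a x : ℝ) :
    HasEntrywiseDerivAt (fun t => Matrix.of fun i j => ∫ s in a..t, g s i j) (g x) x :=
  fun i j => ((hg.matrix_elem i j).integral_hasStrictDerivAt a x).hasDerivAt

theorem differentiableAt_matrix_det [Fintype m] [DecidableEq m] {f : ℝ → Matrix m m ℝ} {x : ℝ}
    (hf : ∀ i j, DifferentiableAt ℝ (fun s => f s i j) x) :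
    DifferentiableAt ℝ (fun s => (f s).det) x := by
  simp only [det_apply']
  fun_prop

theorem differentiableAt_matrix_inv_apply [Fintype m] [DecidableEq m] {f : ℝ → Matrix m m ℝ} {x : ℝ}
    (hf : ∀ i j, DifferentiableAt ℝ (fun s => f s i j) x) (hx : IsUnit (f x)) (i j : m) :
    DifferentiableAt ℝ (fun s => (f s)⁻¹ i j) x := by
  have hdet : (f x).det ≠ 0 := ((isUnit_iff_isUnit_det _).mp hx).ne_zero
  have hadj (i j : m) : DifferentiableAt ℝ (fun s => (f s).adjugate i j) x := by
    simp only [adjugate_apply]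
    refine differentiableAt_matrix_det fun k l => ?_
    simp only [updateRow_apply]
    split_ifs
    exacts [differentiableAt_const _, hf k l]
  simp only [inv_def, Matrix.smul_apply, smul_eq_mul, Ring.inverse_eq_inv']
  exact ((differentiableAt_matrix_det hf).inv hdet).mul (hadj i j)

theorem HasEntrywiseDerivAt.inv [Fintype m] [DecidableEq m] {f : ℝ → Matrix m m ℝ}
    {f' : Matrix m m ℝ} {x : ℝ} (hf : HasEntrywiseDerivAt f f' x) (hx : IsUnit (f x)) :
    HasEntrywiseDerivAt (fun s => (f s)⁻¹) (-((f x)⁻¹ * f' * (f x)⁻¹)) x := by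
  have hfd i j := (hf i j).differentiableAt
  have hdet : IsUnit (f x).det := (isUnit_iff_isUnit_det _).mp hx
  set D := entrywiseDeriv (fun s => (f s)⁻¹) x
  have hD : HasEntrywiseDerivAt (fun s => (f s)⁻¹) D x := fun i j =>
    (differentiableAt_matrix_inv_apply hfd hx i j).hasDerivAt
  have hunit : ∀ᶠ s in 𝓝 x, IsUnit (f s).det := by
    filter_upwards [(differentiableAt_matrix_det hfd).continuousAt.eventually_ne hdet.ne_zero]
      with s hs using hs.isUnit
  -- `f * f⁻¹` is locally constant, so its derivative vanishes
  have hprod : f' * (f x)⁻¹ + f x * D = 0 := by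
    ext i j
    refine ((hf.mul hD) i j).unique
      ((hasDerivAt_const x ((1 : Matrix m m ℝ) i j)).congr_of_eventuallyEq ?_)
    filter_upwards [hunit] with s hs
    rw [mul_nonsing_inv _ hs]
  have hDeq : D = -((f x)⁻¹ * f' * (f x)⁻¹) := by
    calc D = (f x)⁻¹ * (f x * D) := by rw [← Matrix.mul_assoc, nonsing_inv_mul _ hdet, one_mul]
      _ = (f x)⁻¹ * -(f' * (f x)⁻¹) := by rw [eq_neg_of_add_eq_zero_right hprod]
      _ = -((f x)⁻¹ * f' * (f x)⁻¹) := by rw [Matrix.mul_neg, Matrix.mul_assoc]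
  exact hDeq ▸ hD

theorem isSymm_mul_nonsing_inv {R : Type*} [CommRing R] [Fintype m] [DecidableEq m]
    {S S' : Matrix m m R} (hS : IsUnit S) (hw : Sᵀ * S' = S'ᵀ * S) : (S' * S⁻¹).IsSymm := by
  have hdet : IsUnit S.det := (isUnit_iff_isUnit_det _).mp hS
  have hinvT : S⁻¹ᵀ * Sᵀ = 1 := by rw [← transpose_mul, mul_nonsing_inv _ hdet, transpose_one]
  calc (S' * S⁻¹)ᵀ = S⁻¹ᵀ * (S'ᵀ * S) * S⁻¹ := by
        rw [transpose_mul, Matrix.mul_assoc, Matrix.mul_assoc, mul_nonsing_inv _ hdet,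
          Matrix.mul_one]
    _ = S' * S⁻¹ := by rw [← hw, ← Matrix.mul_assoc, hinvT, Matrix.one_mul]

theorem HasEntrywiseDerivAt.sub_mul_of_mul_eq [Fintype m] {S ψ : ℝ → Matrix m n ℝ}
    {U : ℝ → Matrix m m ℝ} {S' : Matrix m n ℝ} {U' : Matrix m m ℝ} {x : ℝ}
    (hS : HasEntrywiseDerivAt S S' x) (hU : HasEntrywiseDerivAt U U' x)
    (hψ : HasEntrywiseDerivAt ψ (S x - U x * ψ x) x) (hUS : U x * S x = S') :
    HasEntrywiseDerivAt (fun s => S s - U s * ψ s) ((U x * U x - U') * ψ x) x := by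
  convert hS.sub (hU.mul hψ) using 1
  simp only [← hUS, Matrix.mul_sub, Matrix.sub_mul, Matrix.mul_assoc]
  abel

section FactorizationEnergy

variable [Fintype m] [DecidableEq m]

theorem HasEntrywiseDerivAt.transpose_inv {S : ℝ → Matrix m m ℝ} {S' : Matrix m m ℝ} {x : ℝ}
    (hS : HasEntrywiseDerivAt S S' x) (hu : IsUnit (S x)) (hw : (S x)ᵀ * S' = S'ᵀ * S x) :
    HasEntrywiseDerivAt (fun s => (S s)ᵀ⁻¹) (-(S' * (S x)⁻¹ * (S x)ᵀ⁻¹)) x := by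
  have h := hS.transpose.inv ((isUnit_transpose _).mpr hu)
  rwa [← transpose_nonsing_inv, ← transpose_mul, (isSymm_mul_nonsing_inv hu hw).eq,
    transpose_nonsing_inv] at h

theorem HasEntrywiseDerivAt.mul_inv_of_eq_mul {S S' : ℝ → Matrix m m ℝ} {B : Matrix m m ℝ}
    {x : ℝ} (hS : HasEntrywiseDerivAt S (S' x) x) (hS' : HasEntrywiseDerivAt S' (B * S x) x)
    (hu : IsUnit (S x)) :
    HasEntrywiseDerivAt (fun s => S' s * (S s)⁻¹) (B - S' x * (S x)⁻¹ * (S' x * (S x)⁻¹)) x := by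
  convert hS'.mul (hS.inv hu) using 1
  rw [mul_nonsing_inv_cancel_right _ _ ((isUnit_iff_isUnit_det _).mp hu), Matrix.mul_neg,
    sub_eq_add_neg]
  simp only [Matrix.mul_assoc]

noncomputable def secondSolution (S : ℝ → Matrix m m ℝ) (r₀ r : ℝ) : Matrix m m ℝ :=
  (S r)ᵀ⁻¹ * Matrix.of fun i j => ∫ s in r₀..r, ((S s)ᵀ * S s) i j

variable {S S' : ℝ → Matrix m m ℝ} (hS : ∀ x, HasEntrywiseDerivAt S (S' x) x)
  (hu : ∀ x, IsUnit (S x)) (hw : ∀ x, (S x)ᵀ * S' x = (S' x)ᵀ * S x) (r₀ : ℝ)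
include hS hu hw

theorem hasEntrywiseDerivAt_secondSolution (x : ℝ) :
    HasEntrywiseDerivAt (secondSolution S r₀) (S x - S' x * (S x)⁻¹ * secondSolution S r₀ x) x := by
  have hcont := HasEntrywiseDerivAt.continuous hS
  have hF := hasEntrywiseDerivAt_integral (hcont.matrix_transpose.matrix_mul hcont) r₀ x
  have hdet : IsUnit (S x)ᵀ.det := (isUnit_iff_isUnit_det _).mp ((isUnit_transpose _).mpr (hu x))
  convert ((hS x).transpose_inv (hu x) (hw x)).mul hF using 1
  · rfl
  rw [← Matrix.mul_assoc, nonsing_inv_mul _ hdet, Matrix.one_mul, secondSolution, Matrix.neg_mul,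
    Matrix.mul_assoc (S' x * _)]
  abel

theorem wronskian_transpose_inv_secondSolution (x : ℝ) :
    wronskian (fun s => (S s)ᵀ⁻¹) (secondSolution S r₀) x = 1 := by
  rw [wronskian, ((hS x).transpose_inv (hu x) (hw x)).entrywiseDeriv_eq,
    (hasEntrywiseDerivAt_secondSolution hS hu hw r₀ x).entrywiseDeriv_eq, transpose_neg,
    transpose_mul, (isSymm_mul_nonsing_inv (hu x) (hw x)).eq, ← transpose_nonsing_inv,
    transpose_transpose]
  simp only [Matrix.mul_sub, Matrix.neg_mul, Matrix.mul_assoc,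
    nonsing_inv_mul _ ((isUnit_iff_isUnit_det _).mp (hu x))]
  abel

theorem hasEntrywiseDerivAt_entrywiseDeriv_secondSolution {B : ℝ → Matrix m m ℝ}
    (hS' : ∀ x, HasEntrywiseDerivAt S' (B x * S x) x) (x : ℝ) :
    HasEntrywiseDerivAt (entrywiseDeriv (secondSolution S r₀))
      ((B x - (2 : ℝ) • entrywiseDeriv (fun s => S' s * (S s)⁻¹) x) * secondSolution S r₀ x) x := by
  have hψ := hasEntrywiseDerivAt_secondSolution hS hu hw r₀
  have hU := (hS x).mul_inv_of_eq_mul (hS' x) (hu x)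
  have hψ' : entrywiseDeriv (secondSolution S r₀) =
      fun s => S s - S' s * (S s)⁻¹ * secondSolution S r₀ s :=
    funext fun s => (hψ s).entrywiseDeriv_eq
  rw [hψ', hU.entrywiseDeriv_eq]
  have hUS : S' x * (S x)⁻¹ * S x = S' x :=
    nonsing_inv_mul_cancel_right _ _ ((isUnit_iff_isUnit_det _).mp (hu x))
  have h := (hS x).sub_mul_of_mul_eq hU (hψ x) hUS
  have hval : S' x * (S x)⁻¹ * (S' x * (S x)⁻¹) - (B x - S' x * (S x)⁻¹ * (S' x * (S x)⁻¹)) =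
      B x - (2 : ℝ) • (B x - S' x * (S x)⁻¹ * (S' x * (S x)⁻¹)) := by
    rw [two_smul]; abel
  exact hval ▸ h

end FactorizationEnergy

theorem second_solution_at_factorization_energy_general
    (n : ℕ)
    (A : ℝ → Matrix (Fin n) (Fin n) ℝ) (ℰ : ℝ)
    (σ σd σdd : ℝ → Matrix (Fin n) (Fin n) ℝ)
    (hσ : ∀ r i j, HasDerivAt (fun s => σ s i j) (σd r i j) r)
    (hσd : ∀ r i j, HasDerivAt (fun s => σd s i j) (σdd r i j) r)
    (hσinv : ∀ r, IsUnit (σ r))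
    (hσeq : ∀ r, σdd r = (A r - ℰ • (1 : Matrix (Fin n) (Fin n) ℝ)) * σ r)
    (hwronsk : ∀ r, (σ r)ᵀ * σd r = (σd r)ᵀ * σ r)
    (r₀ : ℝ) :
    let U : ℝ → Matrix (Fin n) (Fin n) ℝ := fun r => σd r * (σ r)⁻¹
    let Ud : ℝ → Matrix (Fin n) (Fin n) ℝ := fun r =>
      Matrix.of fun i j => deriv (fun s => U s i j) r
    let φt : ℝ → Matrix (Fin n) (Fin n) ℝ := fun r => ((σ r)ᵀ)⁻¹
    let ψt : ℝ → Matrix (Fin n) (Fin n) ℝ := fun r =>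
      ((σ r)ᵀ)⁻¹ * Matrix.of fun i j => ∫ s in r₀..r, ((σ s)ᵀ * σ s) i j
    let φtd : ℝ → Matrix (Fin n) (Fin n) ℝ := fun r =>
      Matrix.of fun i j => deriv (fun s => φt s i j) r
    let ψtd : ℝ → Matrix (Fin n) (Fin n) ℝ := fun r =>
      Matrix.of fun i j => deriv (fun s => ψt s i j) r
    (∀ (r : ℝ) (i j : Fin n),
      deriv (fun t => deriv (fun s => ψt s i j) t) r
        = ((A r - (2 : ℝ) • Ud r - ℰ • (1 : Matrix (Fin n) (Fin n) ℝ)) * ψt r) i j) ∧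
    (∀ r : ℝ, (φt r)ᵀ * ψtd r - (φtd r)ᵀ * ψt r = 1) ∧
    (∀ r : ℝ, (ψt r)ᵀ * φtd r - (ψtd r)ᵀ * φt r = -1) := by
  intro U Ud φt ψt φtd ψtd
  have hσ'' r : HasEntrywiseDerivAt σd ((A r - ℰ • 1) * σ r) r := hσeq r ▸ hσd r
  have hW (r : ℝ) : wronskian φt ψt r = 1 :=
    wronskian_transpose_inv_secondSolution hσ hσinv hwronsk r₀ r
  refine ⟨fun r i j => ?_, hW, fun r => ?_⟩
  · have hψ := hasEntrywiseDerivAt_entrywiseDeriv_secondSolution hσ hσinv hwronsk r₀ hσ'' r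
    rw [sub_right_comm]
    exact congr_fun₂ hψ.entrywiseDeriv_eq i j
  · change wronskian ψt φt r = -1
    rw [wronskian_swap, hW, transpose_one]

/-- Paper's equation (14): `ψ̃(r) = (σ(r)ᵀ)⁻¹ ∫_{r₀}^r σᵀσ ds` solves the transformed
equation at the factorization energy, and its Wronskian with `φ̃ = (σᵀ)⁻¹` is
constant, equal to the identity matrix. -/
theorem second_solution_at_factorization_energy
    (n : ℕ) (hn : 0 < n)
    (A : ℝ → Matrix (Fin n) (Fin n) ℝ) (ℰ : ℝ)
    (hA : ∀ r, (A r).IsSymm)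
    (σ σd σdd : ℝ → Matrix (Fin n) (Fin n) ℝ)
    (hσ : ∀ r i j, HasDerivAt (fun s => σ s i j) (σd r i j) r)
    (hσd : ∀ r i j, HasDerivAt (fun s => σd s i j) (σdd r i j) r)
    (hσinv : ∀ r, IsUnit (σ r))
    (hσeq : ∀ r, σdd r = (A r - ℰ • (1 : Matrix (Fin n) (Fin n) ℝ)) * σ r)
    (hwronsk : ∀ r, (σ r)ᵀ * σd r = (σd r)ᵀ * σ r)
    (r₀ : ℝ) :
    let U : ℝ → Matrix (Fin n) (Fin n) ℝ := fun r => σd r * (σ r)⁻¹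
    let Ud : ℝ → Matrix (Fin n) (Fin n) ℝ := fun r =>
      Matrix.of fun i j => deriv (fun s => U s i j) r
    let φt : ℝ → Matrix (Fin n) (Fin n) ℝ := fun r => ((σ r)ᵀ)⁻¹
    let ψt : ℝ → Matrix (Fin n) (Fin n) ℝ := fun r =>
      ((σ r)ᵀ)⁻¹ * Matrix.of fun i j => ∫ s in r₀..r, ((σ s)ᵀ * σ s) i j
    let φtd : ℝ → Matrix (Fin n) (Fin n) ℝ := fun r =>
      Matrix.of fun i j => deriv (fun s => φt s i j) r
    let ψtd : ℝ → Matrix (Fin n) (Fin n) ℝ := fun r =>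
      Matrix.of fun i j => deriv (fun s => ψt s i j) r
    (∀ (r : ℝ) (i j : Fin n),
      deriv (fun t => deriv (fun s => ψt s i j) t) r
        = ((A r - (2 : ℝ) • Ud r - ℰ • (1 : Matrix (Fin n) (Fin n) ℝ)) * ψt r) i j) ∧
    (∀ r : ℝ, (φt r)ᵀ * ψtd r - (φtd r)ᵀ * ψt r = 1) ∧
    (∀ r : ℝ, (ψt r)ᵀ * φtd r - (ψtd r)ᵀ * φt r = -1) :=
  second_solution_at_factorization_energy_general n A ℰ σ σd σdd hσ hσd hσinv hσeq hwronsk r₀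
end

section
/- Let N be a positive integer, κ = diag(κ₁,…,κ_N) a real diagonal matrix with strictly positive entries, and C, D real N×N matrices. Define σ(r) = κ^{−1/2}(e^{κr}C + e^{−κr}D). Then for every r, the self-Wronskian W[σ,σ](r) := σ(r)ᵀσ'(r) − σ'(r)ᵀσ(r) equals the constant matrix 2(DᵀC − CᵀD). In particular, W[σ,σ] vanishes identically if and only if DᵀC = CᵀD. -/
open Matrix

/-!
Write `σ = S (P + Q)` with `S = κ^{-1/2}`, `P = e^{κr} C`, `Q = e^{-κr} D`; then `σ' = S κ (P - Q)`.
All the diagonal factors commute and `S S κ = 1`, so the Wronskian collapses to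
`(P + Q)ᵀ(P - Q) - (P - Q)ᵀ(P + Q) = 2(QᵀP - PᵀQ)`, and in `QᵀP = Dᵀ e^{-κr} e^{κr} C = DᵀC`
the exponentials cancel.
-/

namespace Matrix

variable {n R : Type*} [Fintype n] [CommRing R]

theorem transpose_add_mul_sub_sub_transpose_sub_mul_add (P Q : Matrix n n R) :
    (P + Q)ᵀ * (P - Q) - (P - Q)ᵀ * (P + Q) = (2 : R) • (Qᵀ * P - Pᵀ * Q) := by
  simp only [transpose_add, transpose_sub, two_smul]
  noncomm_ring

theorem transpose_diagonal_mul_mul_diagonal_mul [DecidableEq n] {a b : n → R}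
    (hab : ∀ i, a i * b i = 1) (X Y : Matrix n n R) :
    (diagonal a * X)ᵀ * (diagonal b * Y) = Xᵀ * Y := by
  rw [transpose_mul, diagonal_transpose, Matrix.mul_assoc, ← Matrix.mul_assoc (diagonal a),
    diagonal_mul_diagonal, show (fun i => a i * b i) = fun _ => 1 from funext hab, diagonal_one,
    Matrix.one_mul]

theorem wronskian_diagonal_mul_add_diagonal_mul_sub [DecidableEq n] {s t : n → R}
    (hst : ∀ i, s i * t i = 1) (P Q : Matrix n n R) :
    (diagonal s * (P + Q))ᵀ * (diagonal t * (P - Q)) -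
        (diagonal t * (P - Q))ᵀ * (diagonal s * (P + Q)) =
      (2 : R) • (Qᵀ * P - Pᵀ * Q) := by
  rw [transpose_diagonal_mul_mul_diagonal_mul hst,
    transpose_diagonal_mul_mul_diagonal_mul fun i => (mul_comm _ _).trans (hst i),
    transpose_add_mul_sub_sub_transpose_sub_mul_add]

end Matrix

theorem hasDerivAt_exp_mul_add_exp_neg_mul (k c d r : ℝ) :
    HasDerivAt (fun s => Real.exp (k * s) * c + Real.exp (-k * s) * d)
      (k * (Real.exp (k * r) * c - Real.exp (-k * r) * d)) r := by
  have hexp (a : ℝ) : HasDerivAt (fun s => Real.exp (a * s)) (a * Real.exp (a * r)) r := by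
    simpa [mul_comm] using ((hasDerivAt_id r).const_mul a).exp
  refine (((hexp k).mul_const c).add ((hexp (-k)).mul_const d)).congr_deriv ?_
  ring

theorem self_wronskian_of_exponential_solution_general
    (N : ℕ)
    (κ : Fin N → ℝ) (hκ : ∀ i, 0 < κ i)
    (C D : Matrix (Fin N) (Fin N) ℝ) :
    let σ : ℝ → Matrix (Fin N) (Fin N) ℝ := fun r =>
      diagonal (fun i => (Real.sqrt (κ i))⁻¹) *
        (diagonal (fun i => Real.exp (κ i * r)) * C +
          diagonal (fun i => Real.exp (-(κ i) * r)) * D)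
    let σd : ℝ → Matrix (Fin N) (Fin N) ℝ := fun r =>
      Matrix.of fun i j => deriv (fun s => σ s i j) r
    (∀ r : ℝ, (σ r)ᵀ * σd r - (σd r)ᵀ * σ r = (2 : ℝ) • (Dᵀ * C - Cᵀ * D)) ∧
    ((∀ r : ℝ, (σ r)ᵀ * σd r - (σd r)ᵀ * σ r = 0) ↔ Dᵀ * C = Cᵀ * D) := by
  intro σ σd
  have hσd (r : ℝ) : σd r = diagonal (fun i => (Real.sqrt (κ i))⁻¹ * κ i) *
      (diagonal (fun i => Real.exp (κ i * r)) * C -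
        diagonal (fun i => Real.exp (-(κ i) * r)) * D) := by
    ext i j
    simp only [σd, σ, of_apply, diagonal_mul, Matrix.add_apply, Matrix.sub_apply]
    rw [deriv_const_mul _ (hasDerivAt_exp_mul_add_exp_neg_mul _ _ _ r).differentiableAt,
      (hasDerivAt_exp_mul_add_exp_neg_mul _ _ _ r).deriv, mul_assoc]
  have hsqrt (i : Fin N) : (Real.sqrt (κ i))⁻¹ * ((Real.sqrt (κ i))⁻¹ * κ i) = 1 := by
    rw [← mul_assoc, ← mul_inv, Real.mul_self_sqrt (hκ i).le, inv_mul_cancel₀ (hκ i).ne']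
  have hexp (r : ℝ) (i : Fin N) : Real.exp (-(κ i) * r) * Real.exp (κ i * r) = 1 := by
    rw [← Real.exp_add, neg_mul, neg_add_cancel, Real.exp_zero]
  have hwronskian (r : ℝ) : (σ r)ᵀ * σd r - (σd r)ᵀ * σ r = (2 : ℝ) • (Dᵀ * C - Cᵀ * D) := by
    rw [hσd, wronskian_diagonal_mul_add_diagonal_mul_sub hsqrt,
      transpose_diagonal_mul_mul_diagonal_mul (hexp r),
      transpose_diagonal_mul_mul_diagonal_mul fun i => (mul_comm _ _).trans (hexp r i)]
  refine ⟨hwronskian, fun h => ?_, fun h r => by rw [hwronskian, h, sub_self, smul_zero]⟩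
  have h0 : (2 : ℝ) • (Dᵀ * C - Cᵀ * D) = 0 := (hwronskian 0).symm.trans (h 0)
  exact sub_eq_zero.mp ((smul_eq_zero.mp h0).resolve_left two_ne_zero)

/-- Paper's equation (29): the self-Wronskian of the factorization solution
`σ(r) = κ^{-1/2}(e^{κr}C + e^{-κr}D)` is the constant matrix `2(DᵀC - CᵀD)`;
in particular it vanishes identically iff `DᵀC = CᵀD`. -/
theorem self_wronskian_of_exponential_solution
    (N : ℕ) (hN : 0 < N)
    (κ : Fin N → ℝ) (hκ : ∀ i, 0 < κ i)
    (C D : Matrix (Fin N) (Fin N) ℝ) :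
    let σ : ℝ → Matrix (Fin N) (Fin N) ℝ := fun r =>
      diagonal (fun i => (Real.sqrt (κ i))⁻¹) *
        (diagonal (fun i => Real.exp (κ i * r)) * C +
          diagonal (fun i => Real.exp (-(κ i) * r)) * D)
    let σd : ℝ → Matrix (Fin N) (Fin N) ℝ := fun r =>
      Matrix.of fun i j => deriv (fun s => σ s i j) r
    (∀ r : ℝ, (σ r)ᵀ * σd r - (σd r)ᵀ * σ r = (2 : ℝ) • (Dᵀ * C - Cᵀ * D)) ∧
    ((∀ r : ℝ, (σ r)ᵀ * σd r - (σd r)ᵀ * σ r = 0) ↔ Dᵀ * C = Cᵀ * D) :=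
  self_wronskian_of_exponential_solution_general N κ hκ C D
end

section
/- Let N be a positive integer, R ≤ N, let κ' and κ'' be diagonal real matrices of sizes R×R and (N−R)×(N−R) with strictly positive entries, and set κ = diag(κ',κ''). Let Q₀ be a real (N−R)×R matrix and X₀ a symmetric real R×R matrix; define C = [[I,0],[Q₀,0]], D = [[X₀,−Q₀ᵀ],[0,I]], σ(r) = κ^{−1/2}(e^{κr}C + e^{−κr}D), Q(r) = e^{κ''r}Q₀e^{−κ'r}, X(r) = e^{−κ'r}X₀e^{−κ'r} and Y(r) = I + X(r) + Q(r)ᵀQ(r). Fix r and assume Y(r) is invertible. Then σ(r) is invertible and the superpotential satisfies U(r) = σ'(r)σ(r)⁻¹ = −κ + 2 κ^{1/2} [[Y⁻¹, Y⁻¹Qᵀ],[QY⁻¹, QY⁻¹Qᵀ]] κ^{1/2}, where Y, Q are evaluated at r and the block matrix is partitioned with an R×R upper-left block. -/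
/-!
Fix `r` and put `G = diag(e^{κ'r}, e^{-κ''r})`, `T = [[1, 0], [Q, 0]]`, `S = [[X, -Qᵀ], [0, 1]]`.
Conjugating by the exponentials gives `e^{κr} C = T G` and `e^{-κr} D = S G`, so
`σ(r) = κ^{-1/2} (T + S) G` and `σ'(r) = κ^{1/2} (T - S) G`. The middle factor
`M = T + S = [[1 + X, -Qᵀ], [Q, 1]]` has Schur complement `Y`, hence is invertible, and
`[[Y⁻¹, Y⁻¹Qᵀ], [QY⁻¹, QY⁻¹Qᵀ]] M = T`. Writing `T - S = 2T - M` then gives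
`σ' σ⁻¹ = κ^{1/2} (2 T M⁻¹ - 1) κ^{1/2} = -κ + 2 κ^{1/2} T M⁻¹ κ^{1/2}`.
-/

open Matrix

theorem Real.exp_neg_mul_eq_inv {ι : Type*} (κ : ι → ℝ) (r : ℝ) :
    (fun i => Real.exp (-(κ i) * r)) = (fun i => Real.exp (κ i * r))⁻¹ := by
  ext i; simp [neg_mul, Real.exp_neg]

namespace Matrix

variable {m n α : Type*} [Fintype m] [Fintype n] [DecidableEq m] [DecidableEq n]

section CommRing

variable [CommRing α] {Y A : Matrix m m α} {Q : Matrix n m α}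

theorem isUnit_fromBlocks_neg_transpose_one (hY : IsUnit Y) (hA : A + Qᵀ * Q = Y) :
    IsUnit (fromBlocks A (-Qᵀ) Q 1) := by
  rwa [isUnit_iff_isUnit_det, det_fromBlocks_one₂₂, Matrix.neg_mul, sub_neg_eq_add, hA,
    ← isUnit_iff_isUnit_det]

theorem fromBlocks_inv_mul_fromBlocks_neg_transpose_one (hY : IsUnit Y) (hA : A + Qᵀ * Q = Y) :
    fromBlocks Y⁻¹ (Y⁻¹ * Qᵀ) (Q * Y⁻¹) (Q * Y⁻¹ * Qᵀ) * fromBlocks A (-Qᵀ) Q 1 =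
      fromBlocks 1 0 Q 0 := by
  have hinv : Y⁻¹ * A + Y⁻¹ * Qᵀ * Q = 1 := by
    rw [Matrix.mul_assoc, ← Matrix.mul_add, hA, nonsing_inv_mul _ ((isUnit_iff_isUnit_det _).mp hY)]
  rw [fromBlocks_multiply, fromBlocks_inj]
  refine ⟨hinv, by simp, ?_, by simp⟩
  rw [Matrix.mul_assoc Q, Matrix.mul_assoc Q, Matrix.mul_assoc Q, ← Matrix.mul_add, hinv,
    Matrix.mul_one]

theorem fromBlocks_one_zero_mul_inv_fromBlocks_neg_transpose_one (hY : IsUnit Y)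
    (hA : A + Qᵀ * Q = Y) :
    fromBlocks 1 0 Q 0 * (fromBlocks A (-Qᵀ) Q 1)⁻¹ =
      fromBlocks Y⁻¹ (Y⁻¹ * Qᵀ) (Q * Y⁻¹) (Q * Y⁻¹ * Qᵀ) := by
  rw [← fromBlocks_inv_mul_fromBlocks_neg_transpose_one hY hA, mul_nonsing_inv_cancel_right]
  exact (isUnit_iff_isUnit_det _).mp (isUnit_fromBlocks_neg_transpose_one hY hA)

theorem mul_sub_mul_mul_inv_inv_mul_add_mul (K G T S : Matrix n n α) (hK : IsUnit K)
    (hG : IsUnit G) (hTS : IsUnit (T + S)) :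
    K * ((T - S) * G) * (K⁻¹ * ((T + S) * G))⁻¹ =
      -(K * K) + (2 : α) • (K * (T * (T + S)⁻¹) * K) := by
  have hK' := (isUnit_iff_isUnit_det _).mp hK
  have hG' := (isUnit_iff_isUnit_det _).mp hG
  have hTS' := (isUnit_iff_isUnit_det _).mp hTS
  have hsub : T - S = (2 : α) • T - (T + S) := by
    rw [two_smul]; abel
  rw [Matrix.mul_inv_rev, Matrix.mul_inv_rev, nonsing_inv_nonsing_inv _ hK', hsub]
  simp only [Matrix.mul_assoc]
  rw [mul_nonsing_inv_cancel_left _ _ hG', ← Matrix.mul_assoc _ (T + S)⁻¹, Matrix.sub_mul,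
    mul_nonsing_inv _ hTS', Matrix.sub_mul, Matrix.one_mul, Matrix.mul_sub, Matrix.smul_mul,
    Matrix.smul_mul, Matrix.mul_smul, Matrix.mul_assoc]
  abel

end CommRing

section Field

variable [Field α] {a : m → α} {b : n → α}

theorem diagonal_inv_mul_diagonal (ha : ∀ i, a i ≠ 0) : diagonal a⁻¹ * diagonal a = 1 := by
  rw [diagonal_mul_diagonal, ← diagonal_one]
  exact congrArg diagonal (funext fun i => inv_mul_cancel₀ (ha i))

theorem isUnit_diagonal_of_ne_zero (ha : ∀ i, a i ≠ 0) : IsUnit (diagonal a) :=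
  isUnit_diagonal.mpr (Pi.isUnit_iff.mpr fun i => (ha i).isUnit)

theorem inv_diagonal_of_ne_zero (ha : ∀ i, a i ≠ 0) : (diagonal a)⁻¹ = diagonal a⁻¹ :=
  inv_eq_left_inv (diagonal_inv_mul_diagonal ha)

theorem diagonal_sum_elim_mul_fromBlocks_one_zero (ha : ∀ i, a i ≠ 0) (Q₀ : Matrix n m α) :
    diagonal (Sum.elim a b) * fromBlocks 1 0 Q₀ 0 =
      fromBlocks 1 0 (diagonal b * Q₀ * diagonal a⁻¹) 0 * diagonal (Sum.elim a b⁻¹) := by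
  rw [← fromBlocks_diagonal, ← fromBlocks_diagonal, fromBlocks_multiply, fromBlocks_multiply]
  simp [Matrix.mul_assoc, diagonal_inv_mul_diagonal ha]

theorem diagonal_sum_elim_inv_mul_fromBlocks_neg_transpose_one (ha : ∀ i, a i ≠ 0)
    (hb : ∀ j, b j ≠ 0) (X₀ : Matrix m m α) (Q₀ : Matrix n m α) :
    diagonal (Sum.elim a⁻¹ b⁻¹) * fromBlocks X₀ (-Q₀ᵀ) 0 1 =
      fromBlocks (diagonal a⁻¹ * X₀ * diagonal a⁻¹) (-(diagonal b * Q₀ * diagonal a⁻¹)ᵀ) 0 1 *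
        diagonal (Sum.elim a b⁻¹) := by
  rw [← fromBlocks_diagonal, ← fromBlocks_diagonal, fromBlocks_multiply, fromBlocks_multiply]
  simp [Matrix.mul_assoc, transpose_mul, diagonal_inv_mul_diagonal ha, hb]

end Field

section Real

theorem diagonal_exp_mul_fromBlocks_one_zero (κ' : m → ℝ) (κ'' : n → ℝ) (Q₀ : Matrix n m ℝ)
    (r : ℝ) :
    diagonal (fun i => Real.exp (Sum.elim κ' κ'' i * r)) * fromBlocks 1 0 Q₀ 0 =
      fromBlocks 1 0 (diagonal (fun j => Real.exp (κ'' j * r)) * Q₀ *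
          diagonal (fun i => Real.exp (-(κ' i) * r))) 0 *
        diagonal (Sum.elim (fun i => Real.exp (κ' i * r)) (fun j => Real.exp (-(κ'' j) * r))) := by
  have hexp : (fun i => Real.exp (Sum.elim κ' κ'' i * r)) =
      Sum.elim (fun i => Real.exp (κ' i * r)) (fun j => Real.exp (κ'' j * r)) := by
    ext (i | j) <;> rfl
  rw [hexp, Real.exp_neg_mul_eq_inv, Real.exp_neg_mul_eq_inv]
  exact diagonal_sum_elim_mul_fromBlocks_one_zero (fun i => (Real.exp_pos _).ne') Q₀

theorem diagonal_exp_neg_mul_fromBlocks_neg_transpose_one (κ' : m → ℝ) (κ'' : n → ℝ)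
    (X₀ : Matrix m m ℝ) (Q₀ : Matrix n m ℝ) (r : ℝ) :
    diagonal (fun i => Real.exp (-(Sum.elim κ' κ'' i) * r)) * fromBlocks X₀ (-Q₀ᵀ) 0 1 =
      fromBlocks (diagonal (fun i => Real.exp (-(κ' i) * r)) * X₀ *
          diagonal (fun i => Real.exp (-(κ' i) * r)))
        (-(diagonal (fun j => Real.exp (κ'' j * r)) * Q₀ *
          diagonal (fun i => Real.exp (-(κ' i) * r)))ᵀ) 0 1 *
        diagonal (Sum.elim (fun i => Real.exp (κ' i * r)) (fun j => Real.exp (-(κ'' j) * r))) := by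
  have hexp : (fun i => Real.exp (-(Sum.elim κ' κ'' i) * r)) =
      Sum.elim (fun i => Real.exp (-(κ' i) * r)) (fun j => Real.exp (-(κ'' j) * r)) := by
    ext (i | j) <;> rfl
  rw [hexp, Real.exp_neg_mul_eq_inv, Real.exp_neg_mul_eq_inv]
  exact diagonal_sum_elim_inv_mul_fromBlocks_neg_transpose_one (fun i => (Real.exp_pos _).ne')
    (fun j => (Real.exp_pos _).ne') X₀ Q₀

theorem diagonal_sqrt_mul_self {κ : n → ℝ} (hκ : ∀ i, 0 ≤ κ i) :
    diagonal (fun i => Real.sqrt (κ i)) * diagonal (fun i => Real.sqrt (κ i)) = diagonal κ := by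
  rw [diagonal_mul_diagonal]
  exact congrArg diagonal (funext fun i => Real.mul_self_sqrt (hκ i))

theorem of_deriv_inv_sqrt_mul_exp_add {p : Type*} (κ : n → ℝ) (C D : Matrix n p ℝ) (r : ℝ) :
    (of fun i j => deriv (fun t => (diagonal (fun i => (Real.sqrt (κ i))⁻¹) *
        (diagonal (fun i => Real.exp (κ i * t)) * C +
          diagonal (fun i => Real.exp (-(κ i) * t)) * D)) i j) r) =
      diagonal (fun i => Real.sqrt (κ i)) * (diagonal (fun i => Real.exp (κ i * r)) * C -
        diagonal (fun i => Real.exp (-(κ i) * r)) * D) := by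
  ext i j
  simp only [of_apply, diagonal_mul, add_apply, sub_apply]
  refine (((((hasDerivAt_id r).const_mul (κ i)).exp.mul_const (C i j)).add
    (((hasDerivAt_id r).const_mul (-(κ i))).exp.mul_const (D i j))).const_mul _).deriv.trans ?_
  have hcoef : (Real.sqrt (κ i))⁻¹ * κ i = Real.sqrt (κ i) := by
    rw [inv_mul_eq_div, Real.div_sqrt]
  simp only [id]
  linear_combination (Real.exp (κ i * r) * C i j - Real.exp (-(κ i) * r) * D i j) * hcoef

end Real

end Matrix

theorem prop1_superpotential_formula_general
    (N R : ℕ)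
    (κ' : Fin R → ℝ) (κ'' : Fin (N - R) → ℝ)
    (hκ' : ∀ i, 0 < κ' i) (hκ'' : ∀ j, 0 < κ'' j)
    (Q₀ : Matrix (Fin (N - R)) (Fin R) ℝ)
    (X₀ : Matrix (Fin R) (Fin R) ℝ)
    (r : ℝ) :
    let κv : Fin R ⊕ Fin (N - R) → ℝ := Sum.elim κ' κ''
    let C : Matrix (Fin R ⊕ Fin (N - R)) (Fin R ⊕ Fin (N - R)) ℝ :=
      fromBlocks 1 0 Q₀ 0
    let D : Matrix (Fin R ⊕ Fin (N - R)) (Fin R ⊕ Fin (N - R)) ℝ :=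
      fromBlocks X₀ (-Q₀ᵀ) 0 1
    let σ : ℝ → Matrix (Fin R ⊕ Fin (N - R)) (Fin R ⊕ Fin (N - R)) ℝ := fun s =>
      diagonal (fun i => (Real.sqrt (κv i))⁻¹) *
        (diagonal (fun i => Real.exp (κv i * s)) * C +
          diagonal (fun i => Real.exp (-(κv i) * s)) * D)
    let σd : ℝ → Matrix (Fin R ⊕ Fin (N - R)) (Fin R ⊕ Fin (N - R)) ℝ := fun s =>
      Matrix.of fun i j => deriv (fun t => σ t i j) s
    let Q : Matrix (Fin (N - R)) (Fin R) ℝ :=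
      diagonal (fun j => Real.exp (κ'' j * r)) * Q₀ *
        diagonal (fun i => Real.exp (-(κ' i) * r))
    let X : Matrix (Fin R) (Fin R) ℝ :=
      diagonal (fun i => Real.exp (-(κ' i) * r)) * X₀ *
        diagonal (fun i => Real.exp (-(κ' i) * r))
    let Y : Matrix (Fin R) (Fin R) ℝ := 1 + X + Qᵀ * Q
    IsUnit Y →
    IsUnit (σ r) ∧
      σd r * (σ r)⁻¹ =
        -(diagonal κv) +
          (2 : ℝ) • (diagonal (fun i => Real.sqrt (κv i)) *
            fromBlocks Y⁻¹ (Y⁻¹ * Qᵀ) (Q * Y⁻¹) (Q * Y⁻¹ * Qᵀ) *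
            diagonal (fun i => Real.sqrt (κv i))) := by
  intro κv C D σ σd Q X Y hY
  have hκv : ∀ i, 0 < κv i := Sum.rec hκ' hκ''
  have hsqrt : ∀ i, Real.sqrt (κv i) ≠ 0 := fun i => (Real.sqrt_pos.mpr (hκv i)).ne'
  set K := diagonal (fun i => Real.sqrt (κv i))
  set T : Matrix (Fin R ⊕ Fin (N - R)) (Fin R ⊕ Fin (N - R)) ℝ := fromBlocks 1 0 Q 0
  set S : Matrix (Fin R ⊕ Fin (N - R)) (Fin R ⊕ Fin (N - R)) ℝ := fromBlocks X (-Qᵀ) 0 1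
  set G := diagonal (Sum.elim (fun i => Real.exp (κ' i * r)) (fun j => Real.exp (-(κ'' j) * r)))
  have hK : IsUnit K := isUnit_diagonal_of_ne_zero hsqrt
  have hG : IsUnit G :=
    isUnit_diagonal_of_ne_zero
      (Sum.rec (fun _ => (Real.exp_pos _).ne') fun _ => (Real.exp_pos _).ne')
  have hTS : T + S = fromBlocks (1 + X) (-Qᵀ) Q 1 := by
    simp only [T, S, fromBlocks_add, zero_add, add_zero]
  have hM : IsUnit (T + S) := hTS ▸ isUnit_fromBlocks_neg_transpose_one hY rfl
  have hσ : σ r = K⁻¹ * ((T + S) * G) := by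
    rw [inv_diagonal_of_ne_zero hsqrt, Matrix.add_mul]
    simp only [σ, C, D, κv, diagonal_exp_mul_fromBlocks_one_zero,
      diagonal_exp_neg_mul_fromBlocks_neg_transpose_one]
    rfl
  have hσd : σd r = K * ((T - S) * G) := by
    refine (of_deriv_inv_sqrt_mul_exp_add κv C D r).trans ?_
    rw [Matrix.sub_mul]
    simp only [C, D, κv, diagonal_exp_mul_fromBlocks_one_zero,
      diagonal_exp_neg_mul_fromBlocks_neg_transpose_one]
    rfl
  refine ⟨hσ ▸ (isUnit_nonsing_inv_iff.mpr hK).mul (hM.mul hG), ?_⟩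
  rw [hσd, hσ, mul_sub_mul_mul_inv_inv_mul_add_mul K G T S hK hG hM,
    diagonal_sqrt_mul_self fun i => (hκv i).le,
    hTS, fromBlocks_one_zero_mul_inv_fromBlocks_neg_transpose_one hY rfl]

/-- Paper's Proposition 1, equation (51): for the canonical factorization solution
`σ(r) = κ^{-1/2}(e^{κr}C + e^{-κr}D)`, if `Y(r) = I + X(r) + Q(r)ᵀQ(r)` is invertible
at a point `r`, then `σ(r)` is invertible there and the superpotential equals
`U(r) = -κ + 2κ^{1/2}[[Y⁻¹, Y⁻¹Qᵀ],[QY⁻¹, QY⁻¹Qᵀ]]κ^{1/2}`. -/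
theorem prop1_superpotential_formula
    (N R : ℕ) (hN : 0 < N) (hR : R ≤ N)
    (κ' : Fin R → ℝ) (κ'' : Fin (N - R) → ℝ)
    (hκ' : ∀ i, 0 < κ' i) (hκ'' : ∀ j, 0 < κ'' j)
    (Q₀ : Matrix (Fin (N - R)) (Fin R) ℝ)
    (X₀ : Matrix (Fin R) (Fin R) ℝ) (hX₀ : X₀.IsSymm)
    (r : ℝ) :
    let κv : Fin R ⊕ Fin (N - R) → ℝ := Sum.elim κ' κ''
    let C : Matrix (Fin R ⊕ Fin (N - R)) (Fin R ⊕ Fin (N - R)) ℝ :=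
      fromBlocks 1 0 Q₀ 0
    let D : Matrix (Fin R ⊕ Fin (N - R)) (Fin R ⊕ Fin (N - R)) ℝ :=
      fromBlocks X₀ (-Q₀ᵀ) 0 1
    let σ : ℝ → Matrix (Fin R ⊕ Fin (N - R)) (Fin R ⊕ Fin (N - R)) ℝ := fun s =>
      diagonal (fun i => (Real.sqrt (κv i))⁻¹) *
        (diagonal (fun i => Real.exp (κv i * s)) * C +
          diagonal (fun i => Real.exp (-(κv i) * s)) * D)
    let σd : ℝ → Matrix (Fin R ⊕ Fin (N - R)) (Fin R ⊕ Fin (N - R)) ℝ := fun s =>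
      Matrix.of fun i j => deriv (fun t => σ t i j) s
    let Q : Matrix (Fin (N - R)) (Fin R) ℝ :=
      diagonal (fun j => Real.exp (κ'' j * r)) * Q₀ *
        diagonal (fun i => Real.exp (-(κ' i) * r))
    let X : Matrix (Fin R) (Fin R) ℝ :=
      diagonal (fun i => Real.exp (-(κ' i) * r)) * X₀ *
        diagonal (fun i => Real.exp (-(κ' i) * r))
    let Y : Matrix (Fin R) (Fin R) ℝ := 1 + X + Qᵀ * Q
    IsUnit Y →
    IsUnit (σ r) ∧
      σd r * (σ r)⁻¹ =
        -(diagonal κv) +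
          (2 : ℝ) • (diagonal (fun i => Real.sqrt (κv i)) *
            fromBlocks Y⁻¹ (Y⁻¹ * Qᵀ) (Q * Y⁻¹) (Q * Y⁻¹ * Qᵀ) *
            diagonal (fun i => Real.sqrt (κv i))) :=
  prop1_superpotential_formula_general N R κ' κ'' hκ' hκ'' Q₀ X₀ r
end

section
/- Let N, R ≤ N, κ = diag(κ',κ'') with κ', κ'' diagonal with strictly positive entries of sizes R×R and (N−R)×(N−R), Q₀ a real (N−R)×R matrix, X₀ a symmetric real R×R matrix, C = [[I,0],[Q₀,0]], D = [[X₀,−Q₀ᵀ],[0,I]], σ(r) = κ^{−1/2}(e^{κr}C + e^{−κr}D), Q(r) = e^{κ''r}Q₀e^{−κ'r}, X(r) = e^{−κ'r}X₀e^{−κ'r} and Y(r) = I + X(r) + Q(r)ᵀQ(r). Then for each fixed r, the matrix σ(r) is invertible if and only if the R×R matrix Y(r) is invertible. -/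
open Matrix

/-- Nonsingularity criterion of the paper's Proposition 1: for the canonical
factorization solution `σ(r) = κ^{-1/2}(e^{κr}C + e^{-κr}D)`, the matrix `σ(r)` is
invertible if and only if `Y(r) = I + X(r) + Q(r)ᵀQ(r)` is invertible. -/
theorem sigma_invertible_iff_Y_invertible
    (N R : ℕ) (hN : 0 < N) (hR : R ≤ N)
    (κ' : Fin R → ℝ) (κ'' : Fin (N - R) → ℝ)
    (hκ' : ∀ i, 0 < κ' i) (hκ'' : ∀ j, 0 < κ'' j)
    (Q₀ : Matrix (Fin (N - R)) (Fin R) ℝ)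
    (X₀ : Matrix (Fin R) (Fin R) ℝ) (hX₀ : X₀.IsSymm)
    (r : ℝ) :
    let κv : Fin R ⊕ Fin (N - R) → ℝ := Sum.elim κ' κ''
    let C : Matrix (Fin R ⊕ Fin (N - R)) (Fin R ⊕ Fin (N - R)) ℝ :=
      fromBlocks 1 0 Q₀ 0
    let D : Matrix (Fin R ⊕ Fin (N - R)) (Fin R ⊕ Fin (N - R)) ℝ :=
      fromBlocks X₀ (-Q₀ᵀ) 0 1
    let σ : Matrix (Fin R ⊕ Fin (N - R)) (Fin R ⊕ Fin (N - R)) ℝ :=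
      diagonal (fun i => (Real.sqrt (κv i))⁻¹) *
        (diagonal (fun i => Real.exp (κv i * r)) * C +
          diagonal (fun i => Real.exp (-(κv i) * r)) * D)
    let Q : Matrix (Fin (N - R)) (Fin R) ℝ :=
      diagonal (fun j => Real.exp (κ'' j * r)) * Q₀ *
        diagonal (fun i => Real.exp (-(κ' i) * r))
    let X : Matrix (Fin R) (Fin R) ℝ :=
      diagonal (fun i => Real.exp (-(κ' i) * r)) * X₀ *
        diagonal (fun i => Real.exp (-(κ' i) * r))
    let Y : Matrix (Fin R) (Fin R) ℝ := 1 + X + Qᵀ * Q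
    IsUnit σ ↔ IsUnit Y := by
  intro κv C D σ Q X Y
  classical
  set Ep : Matrix (Fin R) (Fin R) ℝ :=
    diagonal (fun i => Real.exp (κ' i * r)) with hEp
  set Em : Matrix (Fin R) (Fin R) ℝ :=
    diagonal (fun i => Real.exp (-(κ' i) * r)) with hEm
  set Fp : Matrix (Fin (N - R)) (Fin (N - R)) ℝ :=
    diagonal (fun j => Real.exp (κ'' j * r)) with hFp
  set Fm : Matrix (Fin (N - R)) (Fin (N - R)) ℝ :=
    diagonal (fun j => Real.exp (-(κ'' j) * r)) with hFm
  have hEmEp : Em * Ep = 1 := by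
    rw [hEm, hEp, diagonal_mul_diagonal]
    have : (fun i => Real.exp (-(κ' i) * r) * Real.exp (κ' i * r)) = fun _ => (1 : ℝ) := by
      funext i
      rw [← Real.exp_add, neg_mul, neg_add_cancel, Real.exp_zero]
    rw [this, diagonal_one]
  have hFmFp : Fm * Fp = 1 := by
    rw [hFm, hFp, diagonal_mul_diagonal]
    have : (fun j => Real.exp (-(κ'' j) * r) * Real.exp (κ'' j * r)) = fun _ => (1 : ℝ) := by
      funext j
      rw [← Real.exp_add, neg_mul, neg_add_cancel, Real.exp_zero]
    rw [this, diagonal_one]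
  have hFmInv : Invertible Fm := invertibleOfRightInverse _ _ hFmFp
  have hinvOfFm : ⅟ Fm = Fp := invOf_eq_right_inv hFmFp
  -- block-diagonal decomposition of the exponential diagonal matrices
  have hdp : diagonal (fun i => Real.exp (κv i * r)) = fromBlocks Ep 0 0 Fp := by
    rw [hEp, hFp, fromBlocks_diagonal]
    congr 1
    funext x
    cases x <;> rfl
  have hdm : diagonal (fun i => Real.exp (-(κv i) * r)) = fromBlocks Em 0 0 Fm := by
    rw [hEm, hFm, fromBlocks_diagonal]
    congr 1
    funext x
    cases x <;> rfl
  have hM : diagonal (fun i => Real.exp (κv i * r)) * C +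
      diagonal (fun i => Real.exp (-(κv i) * r)) * D =
      fromBlocks (Ep + Em * X₀) (Em * (-Q₀ᵀ)) (Fp * Q₀) Fm := by
    rw [hdp, hdm]
    show fromBlocks Ep 0 0 Fp * fromBlocks 1 0 Q₀ 0 +
        fromBlocks Em 0 0 Fm * fromBlocks X₀ (-Q₀ᵀ) 0 1 = _
    rw [fromBlocks_multiply, fromBlocks_multiply, fromBlocks_add]
    congr 1 <;> simp
  -- the Schur complement equals Y * Ep
  have hSchur : (Ep + Em * X₀) - (Em * (-Q₀ᵀ)) * ⅟ Fm * (Fp * Q₀) = Y * Ep := by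
    rw [hinvOfFm]
    have hQ : Q = Fp * Q₀ * Em := rfl
    have hX : X = Em * X₀ * Em := rfl
    have hY : Y = 1 + X + Qᵀ * Q := rfl
    have hQt : Qᵀ = Em * Q₀ᵀ * Fp := by
      rw [hQ]
      simp [transpose_mul, hEm, hFp, Matrix.mul_assoc]
    rw [hY, hX, hQt, hQ]
    simp only [Matrix.add_mul, Matrix.one_mul, Matrix.mul_neg, Matrix.neg_mul,
      sub_neg_eq_add, Matrix.mul_assoc, hEmEp, Matrix.mul_one]
  -- determinant computation
  have hdetσ : σ.det = (diagonal (fun i => (Real.sqrt (κv i))⁻¹)).det *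
      (Fm.det * (Y.det * Ep.det)) := by
    show (diagonal (fun i => (Real.sqrt (κv i))⁻¹) *
        (diagonal (fun i => Real.exp (κv i * r)) * C +
          diagonal (fun i => Real.exp (-(κv i) * r)) * D)).det = _
    rw [det_mul, hM, det_fromBlocks₂₂, hSchur, det_mul]
  have hκv : ∀ i, 0 < κv i := by rintro (i | j); exacts [hκ' i, hκ'' j]
  have hd1 : (diagonal (fun i => (Real.sqrt (κv i))⁻¹)).det ≠ 0 := by
    rw [det_diagonal]
    exact Finset.prod_ne_zero_iff.mpr fun i _ =>
      inv_ne_zero (ne_of_gt (Real.sqrt_pos.mpr (hκv i)))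
  have hd2 : Fm.det ≠ 0 := by
    rw [hFm, det_diagonal]
    exact Finset.prod_ne_zero_iff.mpr fun j _ => Real.exp_ne_zero _
  have hd3 : Ep.det ≠ 0 := by
    rw [hEp, det_diagonal]
    exact Finset.prod_ne_zero_iff.mpr fun i _ => Real.exp_ne_zero _
  rw [Matrix.isUnit_iff_isUnit_det, Matrix.isUnit_iff_isUnit_det, hdetσ,
    isUnit_iff_ne_zero, isUnit_iff_ne_zero]
  constructor
  · intro h hY0
    exact h (by rw [hY0]; ring)
  · intro h
    exact mul_ne_zero hd1 (mul_ne_zero hd2 (mul_ne_zero h hd3))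
end

section
/- Under the setup of the previous statement (canonical C = [[I,0],[Q₀,0]], D = [[X₀,−Q₀ᵀ],[0,I]] with X₀ symmetric, σ(r) = κ^{−1/2}(e^{κr}C + e^{−κr}D) invertible at r = 0, U(0) = σ'(0)σ(0)⁻¹, U_∞ = diag(κ'_1,…,κ'_R,−κ''_{R+1},…,−κ''_N), and k complex diagonal with U_∞ − ik invertible), the matrix U(0) is symmetric, and the Jost matrix of the transformed potential, defined as F̃(k) := f̃(0)ᵀ with f̃(r) = (U(r) − ik)e^{ikr}(U_∞ − ik)⁻¹, equals F̃(k) = (U_∞ − ik)⁻¹ (U(0) − ik). -/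
/-!
Since `σ(0) = W (C + D)` and `σ'(0) = W κ (C - D)` with `W² κ = 1`, the Wronskian
`σ'(0)ᵀ σ(0) - σ(0)ᵀ σ'(0)` equals `2 (CᵀD - DᵀC)`, which vanishes for the canonical pair;
hence `U(0) = σ'(0) σ(0)⁻¹` is symmetric. At `r = 0` the exponential factor of `f̃` is the
identity, and transposing `(U(0) - ik)(U_∞ - ik)⁻¹`, a product of symmetric matrices and an
inverse of one, reverses the order.
-/

open Matrix

namespace Matrix

variable {n : Type*} [Fintype n] [DecidableEq n]

theorem fromBlocks_canonical_transpose_mul_comm {m o : Type*} [Fintype m] [Fintype o]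
    [DecidableEq m] [DecidableEq o] {Q : Matrix o m ℝ} {X : Matrix m m ℝ} (hX : X.IsSymm) :
    (fromBlocks 1 0 Q 0 : Matrix (m ⊕ o) (m ⊕ o) ℝ)ᵀ * fromBlocks X (-Qᵀ) 0 1 =
      (fromBlocks X (-Qᵀ) 0 1)ᵀ * fromBlocks 1 0 Q 0 := by
  simp [fromBlocks_transpose, fromBlocks_multiply, hX.eq]

theorem hasDerivAt_diagonal_mul_exp_add_exp_apply (w κ : n → ℝ) (C D : Matrix n n ℝ)
    (s : ℝ) (i j : n) :
    HasDerivAt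
      (fun t => (diagonal w * (diagonal (fun i => Real.exp (κ i * t)) * C +
        diagonal (fun i => Real.exp (-κ i * t)) * D)) i j)
      ((diagonal w * (diagonal (fun i => κ i * Real.exp (κ i * s)) * C -
        diagonal (fun i => κ i * Real.exp (-κ i * s)) * D)) i j) s := by
  simp only [diagonal_mul, add_apply, sub_apply]
  have hplus := ((hasDerivAt_id s).const_mul (κ i)).exp.mul_const (C i j)
  have hminus := ((hasDerivAt_id s).const_mul (-κ i)).exp.mul_const (D i j)
  exact ((hplus.add hminus).const_mul (w i)).congr_deriv (by simp only [id, mul_one]; ring)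

theorem transpose_mul_comm_of_diagonal {w κ : n → ℝ} (hwκ : ∀ i, w i ^ 2 * κ i = 1)
    {C D : Matrix n n ℝ} (hCD : Cᵀ * D = Dᵀ * C) :
    (diagonal (w * κ) * (C - D))ᵀ * (diagonal w * (C + D)) =
      (diagonal w * (C + D))ᵀ * (diagonal (w * κ) * (C - D)) := by
  have hdiag : diagonal (w * κ) * diagonal w = (1 : Matrix n n ℝ) := by
    rw [diagonal_mul_diagonal, ← diagonal_one]
    exact congrArg diagonal (funext fun i => by rw [← hwκ i, Pi.mul_apply]; ring)
  have hdiag' : diagonal w * diagonal (w * κ) = (1 : Matrix n n ℝ) := by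
    rw [← hdiag, diagonal_mul_diagonal, diagonal_mul_diagonal]
    simp only [Pi.mul_apply, mul_comm]
  simp only [transpose_mul, diagonal_transpose, Matrix.mul_assoc]
  rw [← Matrix.mul_assoc (diagonal (w * κ)), hdiag, ← Matrix.mul_assoc (diagonal w), hdiag',
    Matrix.one_mul, Matrix.one_mul]
  simp only [transpose_sub, transpose_add, Matrix.sub_mul, Matrix.mul_add, Matrix.add_mul,
    Matrix.mul_sub, hCD]
  abel

theorem IsSymm.mul_nonsing_inv_of_transpose_mul_comm {R : Type*} [CommRing R]
    {A B : Matrix n n R} (hA : IsUnit A) (hAB : Bᵀ * A = Aᵀ * B) : (B * A⁻¹).IsSymm := by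
  have hAdet : IsUnit A.det := (isUnit_iff_isUnit_det A).mp hA
  have hAtdet : IsUnit Aᵀ.det := by rwa [det_transpose]
  have hBt : Bᵀ = Aᵀ * (B * A⁻¹) := by
    rw [← Matrix.mul_assoc, ← hAB, Matrix.mul_assoc, mul_nonsing_inv _ hAdet, Matrix.mul_one]
  rw [IsSymm, transpose_mul, transpose_nonsing_inv, hBt, ← Matrix.mul_assoc,
    nonsing_inv_mul _ hAtdet, Matrix.one_mul]

end Matrix

theorem prop1_jost_matrix_general
    (N R : ℕ)
    (κ' : Fin R → ℝ) (κ'' : Fin (N - R) → ℝ)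
    (hκ' : ∀ i, 0 < κ' i) (hκ'' : ∀ j, 0 < κ'' j)
    (Q₀ : Matrix (Fin (N - R)) (Fin R) ℝ)
    (X₀ : Matrix (Fin R) (Fin R) ℝ) (hX₀ : X₀.IsSymm)
    (k : Fin R ⊕ Fin (N - R) → ℂ) :
    let κv : Fin R ⊕ Fin (N - R) → ℝ := Sum.elim κ' κ''
    let C : Matrix (Fin R ⊕ Fin (N - R)) (Fin R ⊕ Fin (N - R)) ℝ :=
      fromBlocks 1 0 Q₀ 0
    let D : Matrix (Fin R ⊕ Fin (N - R)) (Fin R ⊕ Fin (N - R)) ℝ :=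
      fromBlocks X₀ (-Q₀ᵀ) 0 1
    let σ : ℝ → Matrix (Fin R ⊕ Fin (N - R)) (Fin R ⊕ Fin (N - R)) ℝ := fun s =>
      diagonal (fun i => (Real.sqrt (κv i))⁻¹) *
        (diagonal (fun i => Real.exp (κv i * s)) * C +
          diagonal (fun i => Real.exp (-(κv i) * s)) * D)
    let σd : ℝ → Matrix (Fin R ⊕ Fin (N - R)) (Fin R ⊕ Fin (N - R)) ℝ := fun s =>
      Matrix.of fun i j => deriv (fun t => σ t i j) s
    let U : ℝ → Matrix (Fin R ⊕ Fin (N - R)) (Fin R ⊕ Fin (N - R)) ℝ := fun s =>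
      σd s * (σ s)⁻¹
    let Uinf : Matrix (Fin R ⊕ Fin (N - R)) (Fin R ⊕ Fin (N - R)) ℂ :=
      diagonal (Sum.elim (fun i => ((κ' i : ℝ) : ℂ)) fun j => -((κ'' j : ℝ) : ℂ))
    let ik : Matrix (Fin R ⊕ Fin (N - R)) (Fin R ⊕ Fin (N - R)) ℂ :=
      diagonal fun i => Complex.I * k i
    let ft : ℝ → Matrix (Fin R ⊕ Fin (N - R)) (Fin R ⊕ Fin (N - R)) ℂ := fun s =>
      ((U s).map (fun x => (x : ℂ)) - ik) *
        diagonal (fun i => Complex.exp (Complex.I * k i * s)) * (Uinf - ik)⁻¹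
    (∀ r : ℝ, 0 ≤ r → IsUnit (σ r)) →
    IsUnit (Uinf - ik) →
    (U 0).IsSymm ∧
    (ft 0)ᵀ = (Uinf - ik)⁻¹ * ((U 0).map (fun x => (x : ℂ)) - ik) := by
  intro κv C D σ σd U Uinf ik ft hσ _
  have hκ : ∀ i, 0 < κv i := fun i => i.rec hκ' hκ''
  set w : Fin R ⊕ Fin (N - R) → ℝ := fun i => (Real.sqrt (κv i))⁻¹
  have hwκ : ∀ i, w i ^ 2 * κv i = 1 := fun i => by
    rw [inv_pow, Real.sq_sqrt (hκ i).le, inv_mul_cancel₀ (hκ i).ne']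
  have hσ0 : σ 0 = diagonal w * (C + D) := by simp [σ, w]
  have hσd0 : σd 0 = diagonal (w * κv) * (C - D) := by
    ext i j
    refine (hasDerivAt_diagonal_mul_exp_add_exp_apply w κv C D 0 i j).deriv.trans ?_
    simp only [mul_zero, Real.exp_zero, mul_one, diagonal_mul, Matrix.sub_apply, Pi.mul_apply]
    ring
  have hsym : (U 0).IsSymm := by
    refine IsSymm.mul_nonsing_inv_of_transpose_mul_comm (hσ 0 le_rfl) ?_
    rw [hσ0, hσd0]
    exact transpose_mul_comm_of_diagonal hwκ (fromBlocks_canonical_transpose_mul_comm hX₀)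
  have hft0 : ft 0 = ((U 0).map (fun x => (x : ℂ)) - ik) * (Uinf - ik)⁻¹ := by
    simp [ft]
  refine ⟨hsym, ?_⟩
  rw [hft0, transpose_mul, transpose_nonsing_inv, ((hsym.map _).sub (isSymm_diagonal _)).eq,
    ((isSymm_diagonal _).sub (isSymm_diagonal _)).eq]

/-- Paper's Theorem 3 / Proposition 1, formula (53): in the setup of formula (52)
(canonical `C`, `D`, `σ(r)` invertible for `r ≥ 0`, `U_∞ - ik` invertible), the
superpotential at the origin `U(0) = σ'(0)σ(0)⁻¹` is symmetric and the Jost matrix of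
the transformed potential, `F̃(k) = f̃(0)ᵀ`, equals `(U_∞ - ik)⁻¹(U(0) - ik)`. -/
theorem prop1_jost_matrix
    (N R : ℕ) (hN : 0 < N) (hR : R ≤ N)
    (κ' : Fin R → ℝ) (κ'' : Fin (N - R) → ℝ)
    (hκ' : ∀ i, 0 < κ' i) (hκ'' : ∀ j, 0 < κ'' j)
    (Q₀ : Matrix (Fin (N - R)) (Fin R) ℝ)
    (hQ₀ : ∀ (i : Fin R) (j : Fin (N - R)), Q₀ j i = 0 ∨ κ'' j < κ' i)
    (X₀ : Matrix (Fin R) (Fin R) ℝ) (hX₀ : X₀.IsSymm)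
    (k : Fin R ⊕ Fin (N - R) → ℂ) (z : ℂ)
    (hk : ∀ i, k i ^ 2 + ((Sum.elim κ' κ'' i : ℝ) : ℂ) ^ 2 = z) :
    let κv : Fin R ⊕ Fin (N - R) → ℝ := Sum.elim κ' κ''
    let C : Matrix (Fin R ⊕ Fin (N - R)) (Fin R ⊕ Fin (N - R)) ℝ :=
      fromBlocks 1 0 Q₀ 0
    let D : Matrix (Fin R ⊕ Fin (N - R)) (Fin R ⊕ Fin (N - R)) ℝ :=
      fromBlocks X₀ (-Q₀ᵀ) 0 1
    let σ : ℝ → Matrix (Fin R ⊕ Fin (N - R)) (Fin R ⊕ Fin (N - R)) ℝ := fun s =>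
      diagonal (fun i => (Real.sqrt (κv i))⁻¹) *
        (diagonal (fun i => Real.exp (κv i * s)) * C +
          diagonal (fun i => Real.exp (-(κv i) * s)) * D)
    let σd : ℝ → Matrix (Fin R ⊕ Fin (N - R)) (Fin R ⊕ Fin (N - R)) ℝ := fun s =>
      Matrix.of fun i j => deriv (fun t => σ t i j) s
    let U : ℝ → Matrix (Fin R ⊕ Fin (N - R)) (Fin R ⊕ Fin (N - R)) ℝ := fun s =>
      σd s * (σ s)⁻¹
    let Uinf : Matrix (Fin R ⊕ Fin (N - R)) (Fin R ⊕ Fin (N - R)) ℂ :=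
      diagonal (Sum.elim (fun i => ((κ' i : ℝ) : ℂ)) fun j => -((κ'' j : ℝ) : ℂ))
    let ik : Matrix (Fin R ⊕ Fin (N - R)) (Fin R ⊕ Fin (N - R)) ℂ :=
      diagonal fun i => Complex.I * k i
    let ft : ℝ → Matrix (Fin R ⊕ Fin (N - R)) (Fin R ⊕ Fin (N - R)) ℂ := fun s =>
      ((U s).map (fun x => (x : ℂ)) - ik) *
        diagonal (fun i => Complex.exp (Complex.I * k i * s)) * (Uinf - ik)⁻¹
    (∀ r : ℝ, 0 ≤ r → IsUnit (σ r)) →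
    IsUnit (Uinf - ik) →
    (U 0).IsSymm ∧
    (ft 0)ᵀ = (Uinf - ik)⁻¹ * ((U 0).map (fun x => (x : ℂ)) - ik) :=
  prop1_jost_matrix_general N R κ' κ'' hκ' hκ'' Q₀ X₀ hX₀ k
end

section
/- Let R and m be positive integers, Q a real m×R matrix, κ' and κ'' diagonal real matrices with strictly positive entries of sizes R×R and m×m, and κ = diag(κ',κ''). Let Y = I + QᵀQ (an invertible R×R matrix) and let Q_r = (Q, −I) be the m×(R+m) block-row matrix. Then Q_rQ_rᵀ = I + QQᵀ is invertible and −κ + 2κ^{1/2} [[Y⁻¹, Y⁻¹Qᵀ],[QY⁻¹, QY⁻¹Qᵀ]] κ^{1/2} = κ − 2κ^{1/2} Q_rᵀ (Q_r Q_rᵀ)⁻¹ Q_r κ^{1/2}. -/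
open Matrix

/-!
With `Y = 1 + QᵀQ` and `N = 1 + QQᵀ`, the push-through identity `Y⁻¹Qᵀ = QᵀN⁻¹` shows that
the `2 × 2` block matrix `[[Y⁻¹, Y⁻¹Qᵀ], [QY⁻¹, QY⁻¹Qᵀ]]` is the complement `1 - Q_rᵀN⁻¹Q_r`
of the orthogonal projection onto the row space of `Q_r = (Q, -1)`, where `Q_rQ_rᵀ = N`.
Conjugating by `κ^{1/2}`, whose square is `κ`, turns this into the stated identity.
-/

namespace Matrix

section PushThrough

variable {m n α : Type*} [Fintype m] [Fintype n] [DecidableEq m] [CommRing α]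

theorem fromCols_neg_one_mul_fromRows_neg_one (A : Matrix m n α) (B : Matrix n m α) :
    fromCols A (-1 : Matrix m m α) * fromRows B (-1 : Matrix m m α) = 1 + A * B := by
  rw [fromCols_mul_fromRows, neg_mul_neg, Matrix.one_mul, add_comm]

variable [DecidableEq n]

theorem mul_one_add_mul_comm (A : Matrix m n α) (B : Matrix n m α) :
    A * (1 + B * A) = (1 + A * B) * A := by
  simp only [Matrix.mul_add, Matrix.add_mul, Matrix.mul_one, Matrix.one_mul, Matrix.mul_assoc]

theorem inv_one_add_mul_comm_mul {A : Matrix m n α} {B : Matrix n m α}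
    (h : IsUnit (1 + A * B).det) : (1 + B * A)⁻¹ * B = B * (1 + A * B)⁻¹ := by
  have h' : IsUnit (1 + B * A).det := det_one_add_mul_comm A B ▸ h
  calc (1 + B * A)⁻¹ * B = (1 + B * A)⁻¹ * B * (1 + A * B) * (1 + A * B)⁻¹ :=
        (mul_nonsing_inv_cancel_right _ _ h).symm
    _ = (1 + B * A)⁻¹ * ((1 + B * A) * B) * (1 + A * B)⁻¹ := by
        rw [Matrix.mul_assoc _ B, mul_one_add_mul_comm]
    _ = B * (1 + A * B)⁻¹ := by rw [nonsing_inv_mul_cancel_left _ _ h']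

theorem fromBlocks_add_fromRows_mul_inv_mul_fromCols {A : Matrix m n α} {B : Matrix n m α}
    (h : IsUnit (1 + A * B).det) :
    fromBlocks (1 + B * A)⁻¹ ((1 + B * A)⁻¹ * B) (A * (1 + B * A)⁻¹) (A * (1 + B * A)⁻¹ * B) +
      fromRows B (-1 : Matrix m m α) * (1 + A * B)⁻¹ * fromCols A (-1 : Matrix m m α) = 1 := by
  have hY : IsUnit (1 + B * A).det := det_one_add_mul_comm A B ▸ h
  have hBN := inv_one_add_mul_comm_mul h
  have hNA : (1 + A * B)⁻¹ * A = A * (1 + B * A)⁻¹ := inv_one_add_mul_comm_mul hY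
  have h₁₁ : (1 + B * A)⁻¹ + (1 + B * A)⁻¹ * B * A = 1 := by
    rw [Matrix.mul_assoc, ← mul_one_add, nonsing_inv_mul _ hY]
  have h₂₂ : A * (1 + B * A)⁻¹ * B + (1 + A * B)⁻¹ = 1 := by
    rw [Matrix.mul_assoc, hBN, ← Matrix.mul_assoc, add_comm, ← one_add_mul, mul_nonsing_inv _ h]
  rw [fromRows_mul, fromRows_mul_fromCols]
  simp only [Matrix.neg_mul, Matrix.mul_neg, Matrix.one_mul, Matrix.mul_one, neg_neg, ← hBN, hNA]
  rw [fromBlocks_add, h₁₁, h₂₂, add_neg_cancel, add_neg_cancel, fromBlocks_one]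

end PushThrough

theorem isUnit_one_add_conjTranspose_mul_self {m n K : Type*} [Fintype m] [Fintype n]
    [DecidableEq n] [Field K] [PartialOrder K] [StarRing K] [StarOrderedRing K]
    (A : Matrix m n K) : IsUnit (1 + Aᴴ * A) :=
  (PosDef.one.add_posSemidef (posSemidef_conjTranspose_mul_self A)).isUnit

theorem diagonal_sqrt_mul_self_s14 {ι : Type*} [Fintype ι] [DecidableEq ι] {d : ι → ℝ}
    (hd : ∀ i, 0 ≤ d i) :
    diagonal (fun i => √(d i)) * diagonal (fun i => √(d i)) = diagonal d := by
  rw [diagonal_mul_diagonal]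
  exact congrArg diagonal (funext fun i => Real.mul_self_sqrt (hd i))

end Matrix

theorem cor1_row_form_general
    (R m : ℕ)
    (κ' : Fin R → ℝ) (κ'' : Fin m → ℝ)
    (hκ' : ∀ i, 0 < κ' i) (hκ'' : ∀ j, 0 < κ'' j)
    (Q : Matrix (Fin m) (Fin R) ℝ) :
    let κv : Fin R ⊕ Fin m → ℝ := Sum.elim κ' κ''
    let sq : Matrix (Fin R ⊕ Fin m) (Fin R ⊕ Fin m) ℝ :=
      diagonal (fun i => Real.sqrt (κv i))
    let Y : Matrix (Fin R) (Fin R) ℝ := 1 + Qᵀ * Q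
    let Qr : Matrix (Fin m) (Fin R ⊕ Fin m) ℝ := fromCols Q (-1)
    IsUnit Y ∧
    Qr * Qrᵀ = 1 + Q * Qᵀ ∧
    IsUnit (Qr * Qrᵀ) ∧
    -(diagonal κv) +
        (2 : ℝ) • (sq * fromBlocks Y⁻¹ (Y⁻¹ * Qᵀ) (Q * Y⁻¹) (Q * Y⁻¹ * Qᵀ) * sq)
      = diagonal κv - (2 : ℝ) • (sq * Qrᵀ * (Qr * Qrᵀ)⁻¹ * Qr * sq) := by
  intro κv sq Y Qr
  have hQrT : Qrᵀ = fromRows Qᵀ (-1) := by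
    rw [transpose_fromCols, transpose_neg, transpose_one]
  have hQr : Qr * Qrᵀ = 1 + Q * Qᵀ := by
    rw [hQrT]
    exact fromCols_neg_one_mul_fromRows_neg_one Q Qᵀ
  have hunit {k l : ℕ} (A : Matrix (Fin k) (Fin l) ℝ) : IsUnit (1 + Aᵀ * A) := by
    simpa only [conjTranspose_eq_transpose_of_trivial] using
      isUnit_one_add_conjTranspose_mul_self A
  have hN : IsUnit (1 + Q * Qᵀ) := by simpa only [transpose_transpose] using hunit Qᵀ
  have hsq : sq * sq = diagonal κv :=
    diagonal_sqrt_mul_self_s14 (Sum.rec (fun i => (hκ' i).le) (fun j => (hκ'' j).le))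
  have hsum : fromBlocks Y⁻¹ (Y⁻¹ * Qᵀ) (Q * Y⁻¹) (Q * Y⁻¹ * Qᵀ)
      = 1 - Qrᵀ * (Qr * Qrᵀ)⁻¹ * Qr := by
    rw [eq_sub_iff_add_eq, hQr, hQrT]
    exact fromBlocks_add_fromRows_mul_inv_mul_fromCols ((isUnit_iff_isUnit_det _).mp hN)
  refine ⟨hunit Q, hQr, hQr ▸ hN, ?_⟩
  rw [hsum, Matrix.mul_sub, Matrix.sub_mul, Matrix.mul_one, hsq]
  simp only [Matrix.mul_assoc]
  module

/-- Paper's identity (55) of Corollary 1: with `Y = I + QᵀQ` and the row block matrix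
`Q_r = (Q, -I)`, one has `Q_rQ_rᵀ = I + QQᵀ` invertible and
`-κ + 2κ^{1/2}[[Y⁻¹, Y⁻¹Qᵀ],[QY⁻¹, QY⁻¹Qᵀ]]κ^{1/2}
  = κ - 2κ^{1/2}Q_rᵀ(Q_rQ_rᵀ)⁻¹Q_rκ^{1/2}`. -/
theorem cor1_row_form
    (R m : ℕ) (hR : 0 < R) (hm : 0 < m)
    (κ' : Fin R → ℝ) (κ'' : Fin m → ℝ)
    (hκ' : ∀ i, 0 < κ' i) (hκ'' : ∀ j, 0 < κ'' j)
    (Q : Matrix (Fin m) (Fin R) ℝ) :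
    let κv : Fin R ⊕ Fin m → ℝ := Sum.elim κ' κ''
    let sq : Matrix (Fin R ⊕ Fin m) (Fin R ⊕ Fin m) ℝ :=
      diagonal (fun i => Real.sqrt (κv i))
    let Y : Matrix (Fin R) (Fin R) ℝ := 1 + Qᵀ * Q
    let Qr : Matrix (Fin m) (Fin R ⊕ Fin m) ℝ := fromCols Q (-1)
    IsUnit Y ∧
    Qr * Qrᵀ = 1 + Q * Qᵀ ∧
    IsUnit (Qr * Qrᵀ) ∧
    -(diagonal κv) +
        (2 : ℝ) • (sq * fromBlocks Y⁻¹ (Y⁻¹ * Qᵀ) (Q * Y⁻¹) (Q * Y⁻¹ * Qᵀ) * sq)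
      = diagonal κv - (2 : ℝ) • (sq * Qrᵀ * (Qr * Qrᵀ)⁻¹ * Qr * sq) :=
  cor1_row_form_general R m κ' κ'' hκ' hκ'' Q
end

section
/- Let N be a positive integer, κ = diag(κ₁,…,κ_N) real diagonal with strictly positive entries, and let 𝒳₀ be a real N-component column vector. Define 𝒳(r) = e^{−κr}𝒳₀ and σ(r) = κ^{−1/2}(e^{κr} + e^{−κr}𝒳₀𝒳₀ᵀ). Then for every r ≥ 0 the matrix σ(r) is invertible, (I + 𝒳𝒳ᵀ)⁻¹ = I − (1 + 𝒳ᵀ𝒳)⁻¹𝒳𝒳ᵀ, and the superpotential satisfies U(r) = σ'(r)σ(r)⁻¹ = κ − 2(1 + 𝒳(r)ᵀ𝒳(r))⁻¹ κ^{1/2} 𝒳(r)𝒳(r)ᵀ κ^{1/2}. -/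
/-!
With `𝒳 = e^{-κr}𝒳₀` and `P = 𝒳𝒳ᵀ` one has `e^{-κr}𝒳₀𝒳₀ᵀ = P e^{κr}`, so
`σ = κ^{-1/2}(1 + P)e^{κr}` and `σ' = κ^{1/2}(1 - P)e^{κr}`. Hence
`σ'σ⁻¹ = κ^{1/2}(1 - P)(1 + P)⁻¹κ^{1/2}`, and since `P² = (𝒳ᵀ𝒳)P` both the inverse of `1 + P`
(Sherman–Morrison) and the Cayley transform `(1 - P)(1 + P)⁻¹` are again rank-one perturbations
of the identity.
-/

open Matrix

namespace Matrix

variable {n K : Type*} [Fintype n]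

section CommSemiring

variable [CommSemiring K]

theorem vecMulVec_mul_self (u v : n → K) :
    vecMulVec u v * vecMulVec u v = (v ⬝ᵥ u) • vecMulVec u v := by
  rw [vecMulVec_mul_vecMulVec, vecMulVec_smul]

variable [DecidableEq n]

theorem vecMulVec_mul_diagonal (u v d : n → K) :
    vecMulVec u v * diagonal d = vecMulVec u (v * d) := by
  rw [vecMulVec_mul]; congr 1; ext; exact vecMul_diagonal _ _ _

theorem diagonal_mul_vecMulVec (d u v : n → K) :
    diagonal d * vecMulVec u v = vecMulVec (d * u) v := by
  rw [mul_vecMulVec]; congr 1; ext; exact mulVec_diagonal _ _ _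

theorem diagonal_mul_vecMulVec_of_mul_eq_one {a b : n → K} (hab : a * b = 1) (u v : n → K) :
    diagonal a * vecMulVec u v = vecMulVec (a * u) (a * v) * diagonal b := by
  rw [vecMulVec_mul_diagonal, diagonal_mul_vecMulVec, mul_right_comm, hab, one_mul]

end CommSemiring

section Field

variable [Field K] [DecidableEq n] {u v : n → K}

theorem one_add_vecMulVec_mul_eq_one (h : 1 + v ⬝ᵥ u ≠ 0) :
    (1 + vecMulVec u v) * (1 - (1 + v ⬝ᵥ u)⁻¹ • vecMulVec u v) = 1 := by
  rw [mul_sub, mul_one, mul_smul_comm, add_mul, one_mul, vecMulVec_mul_self]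
  match_scalars
  · rfl
  · rw [mul_one, inv_mul_cancel₀ h, sub_self]

theorem inv_one_add_vecMulVec (h : 1 + v ⬝ᵥ u ≠ 0) :
    (1 + vecMulVec u v)⁻¹ = 1 - (1 + v ⬝ᵥ u)⁻¹ • vecMulVec u v :=
  inv_eq_right_inv (one_add_vecMulVec_mul_eq_one h)

theorem isUnit_one_add_vecMulVec (h : 1 + v ⬝ᵥ u ≠ 0) : IsUnit (1 + vecMulVec u v) :=
  .of_mul_eq_one _ (one_add_vecMulVec_mul_eq_one h)

theorem one_sub_vecMulVec_mul_inv_one_add (h : 1 + v ⬝ᵥ u ≠ 0) :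
    (1 - vecMulVec u v) * (1 + vecMulVec u v)⁻¹ = 1 - (2 / (1 + v ⬝ᵥ u)) • vecMulVec u v := by
  rw [inv_one_add_vecMulVec h, sub_mul, one_mul, mul_sub, mul_one, mul_smul_comm,
    vecMulVec_mul_self]
  match_scalars
  · rfl
  · field_simp
    ring

end Field

end Matrix

open Real

theorem exp_neg_mul_mul_exp_mul {n : Type*} (κ : n → ℝ) (r : ℝ) :
    ((fun i => exp (-κ i * r)) * fun i => exp (κ i * r)) = 1 :=
  funext fun i => by simp [← exp_add]

section RealDiagonal

variable {n : Type*} [Fintype n]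

theorem one_add_dotProduct_self_pos (X : n → ℝ) : 0 < 1 + X ⬝ᵥ X :=
  add_pos_of_pos_of_nonneg one_pos (by simpa using dotProduct_star_self_nonneg X)

variable [DecidableEq n]

theorem diagonal_inv_sqrt_mul_diagonal (κ : n → ℝ) :
    (diagonal fun i => (√(κ i))⁻¹) * diagonal κ = diagonal fun i => √(κ i) := by
  rw [diagonal_mul_diagonal]
  exact congrArg diagonal (funext fun i => by rw [inv_mul_eq_div, Real.div_sqrt])

theorem diagonal_inv_sqrt_mul_diagonal_sqrt {κ : n → ℝ} (hκ : ∀ i, 0 < κ i) :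
    (diagonal fun i => (√(κ i))⁻¹) * (diagonal fun i => √(κ i)) = 1 := by
  rw [diagonal_mul_diagonal, ← diagonal_one]
  exact congrArg diagonal (funext fun i => inv_mul_cancel₀ (Real.sqrt_pos.2 (hκ i)).ne')

theorem diagonal_sqrt_mul_diagonal_sqrt {κ : n → ℝ} (hκ : ∀ i, 0 ≤ κ i) :
    (diagonal fun i => √(κ i)) * (diagonal fun i => √(κ i)) = diagonal κ := by
  rw [diagonal_mul_diagonal]
  exact congrArg diagonal (funext fun i => Real.mul_self_sqrt (hκ i))

theorem hasDerivAt_diagonal_mul_exp_add_apply (d c : n → ℝ) (B : Matrix n n ℝ) (i j : n) (r : ℝ) :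
    HasDerivAt
      (fun s => (diagonal d * (diagonal (fun k => exp (c k * s)) +
        diagonal (fun k => exp (-c k * s)) * B)) i j)
      ((diagonal d * diagonal c * (diagonal (fun k => exp (c k * r)) -
        diagonal (fun k => exp (-c k * r)) * B)) i j) r := by
  have hexp (a : ℝ) : HasDerivAt (fun s => exp (a * s)) (exp (a * r) * a) r :=
    ((hasDerivAt_id r).const_mul a).exp.congr_deriv (by simp)
  have hB := (hexp (-c i)).mul_const (B i j)
  simp only [diagonal_mul_diagonal, diagonal_mul, Matrix.add_apply, Matrix.sub_apply]
  rcases eq_or_ne i j with rfl | hij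
  · simp only [diagonal_apply_eq]
    exact (((hexp (c i)).add hB).const_mul (d i)).congr_deriv (by ring)
  · simp only [diagonal_apply_ne _ hij, zero_add, zero_sub]
    exact (hB.const_mul (d i)).congr_deriv (by ring)

end RealDiagonal

theorem cor3_rank_one_superpotential_general
    (N : ℕ)
    (κ : Fin N → ℝ) (hκ : ∀ i, 0 < κ i)
    (X₀ : Fin N → ℝ) :
    let Xv : ℝ → (Fin N → ℝ) := fun r i => Real.exp (-(κ i) * r) * X₀ i
    let σ : ℝ → Matrix (Fin N) (Fin N) ℝ := fun r =>
      diagonal (fun i => (Real.sqrt (κ i))⁻¹) *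
        (diagonal (fun i => Real.exp (κ i * r)) +
          diagonal (fun i => Real.exp (-(κ i) * r)) * vecMulVec X₀ X₀)
    let σd : ℝ → Matrix (Fin N) (Fin N) ℝ := fun r =>
      Matrix.of fun i j => deriv (fun s => σ s i j) r
    ∀ r : ℝ, 0 ≤ r →
      IsUnit (σ r) ∧
      ((1 : Matrix (Fin N) (Fin N) ℝ) + vecMulVec (Xv r) (Xv r))⁻¹
        = 1 - (1 + Xv r ⬝ᵥ Xv r)⁻¹ • vecMulVec (Xv r) (Xv r) ∧
      σd r * (σ r)⁻¹ =
        diagonal κ - (2 / (1 + Xv r ⬝ᵥ Xv r)) •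
          (diagonal (fun i => Real.sqrt (κ i)) * vecMulVec (Xv r) (Xv r) *
            diagonal (fun i => Real.sqrt (κ i))) := by
  intro Xv σ σd r _
  set X := Xv r
  set P := vecMulVec X X
  set S : Matrix (Fin N) (Fin N) ℝ := diagonal fun i => √(κ i) with hS
  set E : Matrix (Fin N) (Fin N) ℝ := diagonal fun i => exp (κ i * r)
  have hX : 1 + X ⬝ᵥ X ≠ 0 := (one_add_dotProduct_self_pos X).ne'
  have hPE : diagonal (fun i => exp (-κ i * r)) * vecMulVec X₀ X₀ = P * E :=
    diagonal_mul_vecMulVec_of_mul_eq_one (exp_neg_mul_mul_exp_mul κ r) X₀ X₀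
  have hσ : σ r = (diagonal fun i => (√(κ i))⁻¹) * ((1 + P) * E) := by
    rw [add_mul, one_mul, ← hPE]
  have hσd : σd r = S * ((1 - P) * E) := by
    ext i j
    rw [hS, ← diagonal_inv_sqrt_mul_diagonal, sub_mul, one_mul, ← hPE]
    exact (hasDerivAt_diagonal_mul_exp_add_apply _ κ _ i j r).deriv
  have hE : IsUnit E := isUnit_diagonal.2 (Pi.isUnit_iff.2 fun i => (exp_pos _).ne'.isUnit)
  have hDS := diagonal_inv_sqrt_mul_diagonal_sqrt hκ
  refine ⟨?_, inv_one_add_vecMulVec hX, ?_⟩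
  · rw [hσ]
    exact (IsUnit.of_mul_eq_one S hDS).mul ((isUnit_one_add_vecMulVec hX).mul hE)
  · rw [hσ, hσd, Matrix.mul_inv_rev, Matrix.mul_inv_rev, inv_eq_right_inv hDS]
    calc S * ((1 - P) * E) * (E⁻¹ * (1 + P)⁻¹ * S) = S * ((1 - P) * (1 + P)⁻¹) * S := by
          simp only [Matrix.mul_assoc,
            mul_nonsing_inv_cancel_left _ _ ((isUnit_iff_isUnit_det E).1 hE)]
      _ = _ := by
          rw [one_sub_vecMulVec_mul_inv_one_add hX, Matrix.mul_sub, Matrix.sub_mul,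
            Matrix.mul_one, diagonal_sqrt_mul_diagonal_sqrt fun i => (hκ i).le,
            mul_smul_comm, smul_mul_assoc]

/-- Paper's Corollary 3 (equation (61)): for `σ(r) = κ^{-1/2}(e^{κr} + e^{-κr}𝒳₀𝒳₀ᵀ)`,
the matrix `σ(r)` is invertible for all `r ≥ 0`, the rank-one inverse identity
`(I + 𝒳𝒳ᵀ)⁻¹ = I - (1 + 𝒳ᵀ𝒳)⁻¹𝒳𝒳ᵀ` holds, and the superpotential is
`U(r) = κ - 2(1 + 𝒳ᵀ𝒳)⁻¹κ^{1/2}𝒳𝒳ᵀκ^{1/2}` with `𝒳(r) = e^{-κr}𝒳₀`. -/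
theorem cor3_rank_one_superpotential
    (N : ℕ) (hN : 0 < N)
    (κ : Fin N → ℝ) (hκ : ∀ i, 0 < κ i)
    (X₀ : Fin N → ℝ) :
    let Xv : ℝ → (Fin N → ℝ) := fun r i => Real.exp (-(κ i) * r) * X₀ i
    let σ : ℝ → Matrix (Fin N) (Fin N) ℝ := fun r =>
      diagonal (fun i => (Real.sqrt (κ i))⁻¹) *
        (diagonal (fun i => Real.exp (κ i * r)) +
          diagonal (fun i => Real.exp (-(κ i) * r)) * vecMulVec X₀ X₀)
    let σd : ℝ → Matrix (Fin N) (Fin N) ℝ := fun r =>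
      Matrix.of fun i j => deriv (fun s => σ s i j) r
    ∀ r : ℝ, 0 ≤ r →
      IsUnit (σ r) ∧
      ((1 : Matrix (Fin N) (Fin N) ℝ) + vecMulVec (Xv r) (Xv r))⁻¹
        = 1 - (1 + Xv r ⬝ᵥ Xv r)⁻¹ • vecMulVec (Xv r) (Xv r) ∧
      σd r * (σ r)⁻¹ =
        diagonal κ - (2 / (1 + Xv r ⬝ᵥ Xv r)) •
          (diagonal (fun i => Real.sqrt (κ i)) * vecMulVec (Xv r) (Xv r) *
            diagonal (fun i => Real.sqrt (κ i))) :=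
  cor3_rank_one_superpotential_general N κ hκ X₀
end

section
/- Let N ≥ 2, let κ₁,…,κ_N be strictly positive reals, κ' = κ₁, κ'' = diag(κ₂,…,κ_N), κ = diag(κ',κ''). Let Q₀ be a real column vector of length N−1 (an (N−1)×1 matrix) with entries q⁰₂,…,q⁰_N and Q(r) = e^{κ''r} Q₀ e^{−κ₁r}, with entries q_i(r) = q⁰_i e^{(κ_i − κ₁)r}. Define C = [[1,0],[Q₀,0]], D = [[0,−Q₀ᵀ],[0,I]] and σ(r) = κ^{−1/2}(e^{κr}C + e^{−κr}D). Then for every r, σ(r) is invertible and the superpotential satisfies U(r) = σ'(r)σ(r)⁻¹ = −κ + (2/(1 + Q(r)ᵀQ(r))) κ^{1/2} [[1, Qᵀ],[Q, QQᵀ]] κ^{1/2}, where QQᵀ is the (N−1)×(N−1) matrix with entries q_i q_j and QᵀQ = Σ q_i² is a scalar. -/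
open Matrix

private lemma deriv_aux (c k u v x : ℝ) :
    deriv (fun t => c * (Real.exp (k * t) * u + Real.exp (-k * t) * v)) x
      = c * (k * Real.exp (k * x) * u + -k * Real.exp (-k * x) * v) := by
  have h1 : HasDerivAt (fun t : ℝ => Real.exp (k * t)) (k * Real.exp (k * x)) x := by
    simpa [mul_comm] using ((hasDerivAt_id x).const_mul k).exp
  have h2 : HasDerivAt (fun t : ℝ => Real.exp (-k * t)) (-k * Real.exp (-k * x)) x := by
    simpa [mul_comm] using ((hasDerivAt_id x).const_mul (-k)).exp
  exact (((h1.mul_const u).add (h2.mul_const v)).const_mul c).deriv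

private lemma sum_eq_mulP {n : ℕ} (f : Fin n → ℝ) (c : ℝ) (e q : Fin n → ℝ)
    (h : ∀ k, f k = e k ^ 2 * q k ^ 2 * c) :
    ∑ k, f k = (∑ k, e k ^ 2 * q k ^ 2) * c := by
  rw [Finset.sum_congr rfl fun k _ => h k, ← Finset.sum_mul]

private lemma sum_delta_add {n : ℕ} (f : Fin n → ℝ) (j : Fin n) (b c : ℝ) (e q : Fin n → ℝ)
    (h : ∀ k, f k = (if k = j then b else 0) + e k ^ 2 * q k ^ 2 * c) :
    ∑ k, f k = b + (∑ k, e k ^ 2 * q k ^ 2) * c := by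
  rw [Finset.sum_congr rfl fun k _ => h k, Finset.sum_add_distrib, Finset.sum_ite_eq',
    ← Finset.sum_mul]
  simp

private noncomputable def Xmat {n : ℕ} (κ₁ : ℝ) (κ'' : Fin n → ℝ) (Q₀ : Matrix (Fin n) (Fin 1) ℝ) (r : ℝ) (Dd : ℝ) :
    Matrix (Fin 1 ⊕ Fin n) (Fin 1 ⊕ Fin n) ℝ :=
  fromBlocks
    (Matrix.of fun _ _ => Real.exp (κ₁ * r) / Dd * Real.sqrt κ₁)
    (Matrix.of fun _ j => Q₀ j 0 * Real.exp (κ'' j * r) / Dd * Real.sqrt (κ'' j))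
    (Matrix.of fun i _ => -(Real.exp (κ₁ * r) * Real.exp (κ'' i * r) ^ 2 * Q₀ i 0) / Dd * Real.sqrt κ₁)
    (Matrix.of fun i j =>
      ((if i = j then Real.exp (κ'' i * r) else 0)
        - Real.exp (κ'' i * r) ^ 2 * Real.exp (κ'' j * r) * Q₀ i 0 * Q₀ j 0 / Dd) * Real.sqrt (κ'' j))

set_option maxHeartbeats 1600000 in
/-- Paper's Corollary 2, second formula (60): the rank `C = 1` case with `X₀ = 0`,
where `Q(r) = e^{κ''r}Q₀e^{-κ₁r}` is a column. Then `σ(r)` is invertible for all `r`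
and `U(r) = -κ + (2/(1 + QᵀQ))κ^{1/2}[[1, Qᵀ],[Q, QQᵀ]]κ^{1/2}`. -/
theorem cor2_column_superpotential
    (N : ℕ) (hN : 2 ≤ N)
    (κ₁ : ℝ) (κ'' : Fin (N - 1) → ℝ)
    (hκ₁ : 0 < κ₁) (hκ'' : ∀ i, 0 < κ'' i)
    (Q₀ : Matrix (Fin (N - 1)) (Fin 1) ℝ) :
    let κv : Fin 1 ⊕ Fin (N - 1) → ℝ := Sum.elim (fun _ => κ₁) κ''
    let C : Matrix (Fin 1 ⊕ Fin (N - 1)) (Fin 1 ⊕ Fin (N - 1)) ℝ :=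
      fromBlocks 1 0 Q₀ 0
    let D : Matrix (Fin 1 ⊕ Fin (N - 1)) (Fin 1 ⊕ Fin (N - 1)) ℝ :=
      fromBlocks 0 (-Q₀ᵀ) 0 1
    let σ : ℝ → Matrix (Fin 1 ⊕ Fin (N - 1)) (Fin 1 ⊕ Fin (N - 1)) ℝ := fun s =>
      diagonal (fun i => (Real.sqrt (κv i))⁻¹) *
        (diagonal (fun i => Real.exp (κv i * s)) * C +
          diagonal (fun i => Real.exp (-(κv i) * s)) * D)
    let σd : ℝ → Matrix (Fin 1 ⊕ Fin (N - 1)) (Fin 1 ⊕ Fin (N - 1)) ℝ := fun s =>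
      Matrix.of fun i j => deriv (fun t => σ t i j) s
    let Q : ℝ → Matrix (Fin (N - 1)) (Fin 1) ℝ := fun r =>
      diagonal (fun j => Real.exp (κ'' j * r)) * Q₀ *
        diagonal (fun _ : Fin 1 => Real.exp (-κ₁ * r))
    ∀ r : ℝ,
      IsUnit (σ r) ∧
      σd r * (σ r)⁻¹ =
        -(diagonal κv) +
          (2 / (1 + ((Q r)ᵀ * Q r) 0 0)) •
            (diagonal (fun i => Real.sqrt (κv i)) *
              fromBlocks 1 (Q r)ᵀ (Q r) (Q r * (Q r)ᵀ) *
              diagonal (fun i => Real.sqrt (κv i))) := by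
  intro κv C D σ σd Q r
  have hA : (0:ℝ) < Real.exp (κ₁ * r) := Real.exp_pos _
  have hDd : (0:ℝ) < Real.exp (κ₁ * r) ^ 2 + ∑ k, Real.exp (κ'' k * r) ^ 2 * Q₀ k 0 ^ 2 := by
    have : (0:ℝ) ≤ ∑ k, Real.exp (κ'' k * r) ^ 2 * Q₀ k 0 ^ 2 :=
      Finset.sum_nonneg fun k _ => by positivity
    nlinarith
  have hs₁ : (0:ℝ) < Real.sqrt κ₁ := Real.sqrt_pos.2 hκ₁
  have hs'' : ∀ i, (0:ℝ) < Real.sqrt (κ'' i) := fun i => Real.sqrt_pos.2 (hκ'' i)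
  have hexp1 : Real.exp (-κ₁ * r) = (Real.exp (κ₁ * r))⁻¹ := by rw [neg_mul, Real.exp_neg]
  have hexp2 : ∀ i, Real.exp (-κ'' i * r) = (Real.exp (κ'' i * r))⁻¹ := fun i => by
    rw [neg_mul, Real.exp_neg]
  -- entry formula for σ
  have hσ : ∀ t i j, σ t i j =
      (Real.sqrt (κv i))⁻¹ *
        (Real.exp (κv i * t) * C i j + Real.exp (-(κv i) * t) * D i j) := by
    intro t i j
    simp only [σ, Matrix.add_apply, Matrix.diagonal_mul, mul_add]
  have hσd : ∀ i j, σd r i j =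
      (Real.sqrt (κv i))⁻¹ *
        (κv i * Real.exp (κv i * r) * C i j + -(κv i) * Real.exp (-(κv i) * r) * D i j) := by
    intro i j
    have hfun : (fun t => σ t i j) = fun t =>
        (Real.sqrt (κv i))⁻¹ *
          (Real.exp (κv i * t) * C i j + Real.exp (-(κv i) * t) * D i j) :=
      funext fun t => hσ t i j
    show deriv (fun t => σ t i j) r = _
    rw [hfun, deriv_aux]
  -- explicit entries of σ r
  have hs11 : σ r (Sum.inl 0) (Sum.inl 0) = (Real.sqrt κ₁)⁻¹ * Real.exp (κ₁ * r) := by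
    rw [hσ]
    simp [κv, C, D, Matrix.one_apply]
  have hs12 : ∀ k, σ r (Sum.inl 0) (Sum.inr k)
      = -((Real.sqrt κ₁)⁻¹ * (Real.exp (κ₁ * r))⁻¹ * Q₀ k 0) := by
    intro k
    rw [hσ]
    simp [κv, C, D]
    rw [Real.exp_neg]; ring
  have hs21 : ∀ i, σ r (Sum.inr i) (Sum.inl 0)
      = (Real.sqrt (κ'' i))⁻¹ * Real.exp (κ'' i * r) * Q₀ i 0 := by
    intro i
    rw [hσ]
    simp [κv, C, D]
    ring
  have hs22 : ∀ i k, σ r (Sum.inr i) (Sum.inr k)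
      = if i = k then (Real.sqrt (κ'' i))⁻¹ * (Real.exp (κ'' i * r))⁻¹ else 0 := by
    intro i k
    rw [hσ]
    simp [κv, C, D, Matrix.one_apply, Real.exp_neg]
  -- σd entries
  have hd11 : σd r (Sum.inl 0) (Sum.inl 0) = (Real.sqrt κ₁)⁻¹ * (κ₁ * Real.exp (κ₁ * r)) := by
    rw [hσd]; simp [κv, C, D, Matrix.one_apply]
  have hd12 : ∀ k, σd r (Sum.inl 0) (Sum.inr k)
      = (Real.sqrt κ₁)⁻¹ * (κ₁ * (Real.exp (κ₁ * r))⁻¹ * Q₀ k 0) := by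
    intro k
    rw [hσd]; simp [κv, C, D, Real.exp_neg]
  have hd21 : ∀ i, σd r (Sum.inr i) (Sum.inl 0)
      = (Real.sqrt (κ'' i))⁻¹ * (κ'' i * Real.exp (κ'' i * r)) * Q₀ i 0 := by
    intro i
    rw [hσd]; simp [κv, C, D]; ring
  have hd22 : ∀ i k, σd r (Sum.inr i) (Sum.inr k)
      = if i = k then -((Real.sqrt (κ'' i))⁻¹ * (κ'' i * (Real.exp (κ'' i * r))⁻¹)) else 0 := by
    intro i k
    rw [hσd]; simp [κv, C, D, Matrix.one_apply, Real.exp_neg]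
  set Dd : ℝ := Real.exp (κ₁ * r) ^ 2 + ∑ k, Real.exp (κ'' k * r) ^ 2 * Q₀ k 0 ^ 2 with hDddef
  clear_value Dd
  -- X entries
  have hx11 : Xmat κ₁ κ'' Q₀ r Dd (Sum.inl 0) (Sum.inl 0)
      = Real.exp (κ₁ * r) / Dd * Real.sqrt κ₁ := by simp [Xmat]
  have hx12 : ∀ j, Xmat κ₁ κ'' Q₀ r Dd (Sum.inl 0) (Sum.inr j)
      = Q₀ j 0 * Real.exp (κ'' j * r) / Dd * Real.sqrt (κ'' j) := by intro j; simp [Xmat]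
  have hx21 : ∀ k, Xmat κ₁ κ'' Q₀ r Dd (Sum.inr k) (Sum.inl 0)
      = -(Real.exp (κ₁ * r) * Real.exp (κ'' k * r) ^ 2 * Q₀ k 0) / Dd * Real.sqrt κ₁ := by
    intro k; simp [Xmat]
  have hx22 : ∀ k j, Xmat κ₁ κ'' Q₀ r Dd (Sum.inr k) (Sum.inr j)
      = ((if k = j then Real.exp (κ'' k * r) else 0)
          - Real.exp (κ'' k * r) ^ 2 * Real.exp (κ'' j * r) * Q₀ k 0 * Q₀ j 0 / Dd)
        * Real.sqrt (κ'' j) := by intro k j; simp [Xmat]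
  have hXinv : σ r * Xmat κ₁ κ'' Q₀ r Dd = 1 := by
    ext i j
    obtain i | i := i <;> obtain j | j := j
    · have h1 := Fin.fin_one_eq_zero i; have h2 := Fin.fin_one_eq_zero j; subst h1; subst h2
      rw [Matrix.mul_apply, Fintype.sum_sum_type]
      simp only [Fin.sum_univ_one, hs11, hs12, hx11, hx21, Matrix.one_apply_eq]
      rw [Finset.sum_congr rfl
          (g := fun k => Real.exp (κ'' k * r) ^ 2 * Q₀ k 0 ^ 2 *
            ((Real.sqrt κ₁)⁻¹ * (Real.exp (κ₁ * r))⁻¹ * Real.exp (κ₁ * r) * Real.sqrt κ₁ / Dd))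
          (fun k _ => by ring), ← Finset.sum_mul, hDddef]
      field_simp
    · have h1 := Fin.fin_one_eq_zero i; subst h1
      rw [Matrix.mul_apply, Fintype.sum_sum_type]
      simp only [Fin.sum_univ_one, hs11, hs12, hx12, hx22]
      rw [Matrix.one_apply_ne (by simp)]
      rw [Finset.sum_congr rfl
          (g := fun k =>
            (if k = j then -((Real.sqrt κ₁)⁻¹ * (Real.exp (κ₁ * r))⁻¹ * Q₀ j 0 *
                Real.exp (κ'' j * r) * Real.sqrt (κ'' j)) else 0)
            + Real.exp (κ'' k * r) ^ 2 * Q₀ k 0 ^ 2 *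
              ((Real.sqrt κ₁)⁻¹ * (Real.exp (κ₁ * r))⁻¹ * Real.exp (κ'' j * r) * Q₀ j 0 *
                Real.sqrt (κ'' j) / Dd))
          (fun k _ => by
            rcases eq_or_ne k j with h | h
            · subst h; simp only [eq_self_iff_true, if_true]; ring
            · simp only [if_neg h]; ring),
        Finset.sum_add_distrib, Finset.sum_ite_eq', ← Finset.sum_mul, hDddef]
      simp only [Finset.mem_univ, if_true]
      field_simp [hDd.ne', Real.exp_ne_zero, hs₁.ne', (hs'' j).ne']
      ring
    · have h1 := Fin.fin_one_eq_zero j; subst h1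
      rw [Matrix.mul_apply, Fintype.sum_sum_type]
      simp only [Fin.sum_univ_one, hs21, hs22, hx11, hx21]
      rw [Matrix.one_apply_ne (by simp)]
      rw [Finset.sum_congr rfl
          (g := fun k => if k = i then
              (Real.sqrt (κ'' i))⁻¹ * (Real.exp (κ'' i * r))⁻¹ *
                (-(Real.exp (κ₁ * r) * Real.exp (κ'' i * r) ^ 2 * Q₀ i 0) / Dd * Real.sqrt κ₁)
            else 0)
          (fun k _ => by
            rcases eq_or_ne k i with h | h
            · subst h; simp only [eq_self_iff_true, if_true]
            · simp only [if_neg h, if_neg (Ne.symm h), zero_mul]),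
        Finset.sum_ite_eq']
      simp only [Finset.mem_univ, if_true]
      field_simp [hDd.ne', Real.exp_ne_zero, hs₁.ne', (hs'' i).ne']
      ring
    · by_cases hij : i = j
      · subst hij
        rw [Matrix.mul_apply, Fintype.sum_sum_type, Matrix.one_apply_eq]
        simp only [Fin.sum_univ_one, hs21, hs22, hx12, hx22]
        rw [Finset.sum_congr rfl
            (g := fun k => if k = i then
                (Real.sqrt (κ'' i))⁻¹ * (Real.exp (κ'' i * r))⁻¹ *
                  ((Real.exp (κ'' i * r)
                    - Real.exp (κ'' i * r) ^ 2 * Real.exp (κ'' i * r) * Q₀ i 0 * Q₀ i 0 / Dd) *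
                    Real.sqrt (κ'' i))
              else 0)
            (fun k _ => by
              rcases eq_or_ne k i with h | h
              · subst h; simp only [eq_self_iff_true, if_true]
              · simp only [if_neg h, if_neg (Ne.symm h), zero_mul]),
          Finset.sum_ite_eq']
        simp only [Finset.mem_univ, if_true]
        rw [hDddef]
        field_simp [hDd.ne', Real.exp_ne_zero, hs₁.ne', (hs'' i).ne']
        ring
      · rw [Matrix.mul_apply, Fintype.sum_sum_type, Matrix.one_apply_ne (by simp [hij])]
        simp only [Fin.sum_univ_one, hs21, hs22, hx12, hx22]
        rw [Finset.sum_congr rfl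
            (g := fun k => if k = i then
                (Real.sqrt (κ'' i))⁻¹ * (Real.exp (κ'' i * r))⁻¹ *
                  ((0 - Real.exp (κ'' i * r) ^ 2 * Real.exp (κ'' j * r) * Q₀ i 0 * Q₀ j 0 / Dd) *
                    Real.sqrt (κ'' j))
              else 0)
            (fun k _ => by
              rcases eq_or_ne k i with h | h
              · subst h; simp only [eq_self_iff_true, if_true, if_neg hij]
              · simp only [if_neg h, if_neg (Ne.symm h), zero_mul]),
          Finset.sum_ite_eq']
        simp only [Finset.mem_univ, if_true]
        field_simp [hDd.ne', Real.exp_ne_zero, hs₁.ne', (hs'' i).ne', (hs'' j).ne']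
        ring
  have hdet : IsUnit (σ r).det := Matrix.isUnit_det_of_right_inverse hXinv
  refine ⟨(Matrix.isUnit_iff_isUnit_det _).2 hdet, ?_⟩
  rw [Matrix.inv_eq_right_inv hXinv]
  have hQ : ∀ k, Q r k 0 = Real.exp (κ'' k * r) * Q₀ k 0 * (Real.exp (κ₁ * r))⁻¹ := by
    intro k
    simp [Q, Matrix.mul_diagonal, Matrix.diagonal_mul, neg_mul, Real.exp_neg]
  have hQQ : ∀ i j, (Q r * (Q r)ᵀ) i j =
      (Real.exp (κ'' i * r) * Q₀ i 0 * (Real.exp (κ₁ * r))⁻¹) *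
        (Real.exp (κ'' j * r) * Q₀ j 0 * (Real.exp (κ₁ * r))⁻¹) := by
    intro i j
    rw [Matrix.mul_apply]
    simp [Fin.sum_univ_one, hQ]
  have hc : 1 + ((Q r)ᵀ * Q r) 0 0 = Dd / Real.exp (κ₁ * r) ^ 2 := by
    rw [Matrix.mul_apply]
    simp only [Matrix.transpose_apply, hQ]
    rw [Finset.sum_congr rfl
        (g := fun k => Real.exp (κ'' k * r) ^ 2 * Q₀ k 0 ^ 2 *
          ((Real.exp (κ₁ * r))⁻¹ * (Real.exp (κ₁ * r))⁻¹))
        (fun k _ => by ring), ← Finset.sum_mul, hDddef]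
    field_simp
    ring
  rw [hc]
  ext i j
  obtain i | i := i <;> obtain j | j := j
  · have h1 := Fin.fin_one_eq_zero i; have h2 := Fin.fin_one_eq_zero j; subst h1; subst h2
    rw [Matrix.mul_apply, Fintype.sum_sum_type]
    simp only [Fin.sum_univ_one, hd11, hd12, hx11, hx21]
    simp only [Matrix.add_apply, Matrix.neg_apply, Matrix.smul_apply, smul_eq_mul,
      Matrix.mul_diagonal, Matrix.diagonal_mul, Matrix.diagonal_apply_eq, κv, Sum.elim_inl,
      Matrix.fromBlocks_apply₁₁, Matrix.one_apply_eq]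
    rw [Finset.sum_congr rfl
        (g := fun k => Real.exp (κ'' k * r) ^ 2 * Q₀ k 0 ^ 2 *
          (-((Real.sqrt κ₁)⁻¹ * (κ₁ * (Real.exp (κ₁ * r))⁻¹) * Real.exp (κ₁ * r) *
            Real.sqrt κ₁ / Dd)))
        (fun k _ => by ring), ← Finset.sum_mul, hDddef]
    generalize hg : Real.sqrt κ₁ = s₁
    rw [show κ₁ = s₁ * s₁ from by rw [← hg, Real.mul_self_sqrt hκ₁.le]]
    have hg0 : s₁ ≠ 0 := by rw [← hg]; exact hs₁.ne'
    field_simp [Real.exp_ne_zero]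
    ring
  · have h1 := Fin.fin_one_eq_zero i; subst h1
    rw [Matrix.mul_apply, Fintype.sum_sum_type]
    simp only [Fin.sum_univ_one, hd11, hd12, hx12, hx22]
    simp only [Matrix.add_apply, Matrix.neg_apply, Matrix.smul_apply, smul_eq_mul,
      Matrix.mul_diagonal, Matrix.diagonal_mul, Matrix.diagonal_apply, κv, Sum.elim_inl,
      Sum.elim_inr, Matrix.fromBlocks_apply₁₂, Matrix.transpose_apply, hQ, reduceCtorEq,
      if_false, neg_zero]
    rw [Finset.sum_congr rfl
        (g := fun k =>
          (if k = j then (Real.sqrt κ₁)⁻¹ * (κ₁ * (Real.exp (κ₁ * r))⁻¹ * Q₀ j 0) *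
              (Real.exp (κ'' j * r) * Real.sqrt (κ'' j)) else 0)
          + Real.exp (κ'' k * r) ^ 2 * Q₀ k 0 ^ 2 *
            (-((Real.sqrt κ₁)⁻¹ * (κ₁ * (Real.exp (κ₁ * r))⁻¹) * Real.exp (κ'' j * r) *
              Q₀ j 0 * Real.sqrt (κ'' j) / Dd)))
        (fun k _ => by
          rcases eq_or_ne k j with h | h
          · subst h; simp only [eq_self_iff_true, if_true]; ring
          · simp only [if_neg h]; ring),
      Finset.sum_add_distrib, Finset.sum_ite_eq', ← Finset.sum_mul, hDddef]
    simp only [Finset.mem_univ, if_true]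
    generalize hg : Real.sqrt κ₁ = s₁
    rw [show κ₁ = s₁ * s₁ from by rw [← hg, Real.mul_self_sqrt hκ₁.le]]
    have hg0 : s₁ ≠ 0 := by rw [← hg]; exact hs₁.ne'
    field_simp [Real.exp_ne_zero, (hs'' j).ne']
    ring
  · have h1 := Fin.fin_one_eq_zero j; subst h1
    rw [Matrix.mul_apply, Fintype.sum_sum_type]
    simp only [Fin.sum_univ_one, hd21, hd22, hx11, hx21]
    simp only [Matrix.add_apply, Matrix.neg_apply, Matrix.smul_apply, smul_eq_mul,
      Matrix.mul_diagonal, Matrix.diagonal_mul, Matrix.diagonal_apply, κv, Sum.elim_inl,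
      Sum.elim_inr, Matrix.fromBlocks_apply₂₁, hQ, reduceCtorEq, if_false, neg_zero]
    rw [Finset.sum_congr rfl
        (g := fun k => if k = i then
            -((Real.sqrt (κ'' i))⁻¹ * (κ'' i * (Real.exp (κ'' i * r))⁻¹)) *
              (-(Real.exp (κ₁ * r) * Real.exp (κ'' i * r) ^ 2 * Q₀ i 0) / Dd * Real.sqrt κ₁)
          else 0)
        (fun k _ => by
          rcases eq_or_ne k i with h | h
          · subst h; simp only [eq_self_iff_true, if_true]
          · simp only [if_neg h, if_neg (Ne.symm h), zero_mul]),
      Finset.sum_ite_eq']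
    simp only [Finset.mem_univ, if_true]
    generalize hg : Real.sqrt (κ'' i) = si
    rw [show κ'' i = si * si from by rw [← hg, Real.mul_self_sqrt (hκ'' i).le]]
    have hg0 : si ≠ 0 := by rw [← hg]; exact (hs'' i).ne'
    field_simp [Real.exp_ne_zero, hs₁.ne']
    ring
  · rw [Matrix.mul_apply, Fintype.sum_sum_type]
    simp only [Fin.sum_univ_one, hd21, hd22, hx12, hx22]
    simp only [Matrix.add_apply, Matrix.neg_apply, Matrix.smul_apply, smul_eq_mul,
      Matrix.mul_diagonal, Matrix.diagonal_mul, Matrix.diagonal_apply, κv, Sum.elim_inr,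
      Matrix.fromBlocks_apply₂₂, Sum.inr.injEq, hQQ]
    by_cases hij : i = j
    · subst hij
      simp only [eq_self_iff_true, if_true]
      rw [Finset.sum_congr rfl
          (g := fun k => if k = i then
              -((Real.sqrt (κ'' i))⁻¹ * (κ'' i * (Real.exp (κ'' i * r))⁻¹)) *
                ((Real.exp (κ'' i * r) - Real.exp (κ'' i * r) ^ 2 * Real.exp (κ'' i * r) *
                    Q₀ i 0 * Q₀ i 0 / Dd) * Real.sqrt (κ'' i))
            else 0)
          (fun k _ => by
            rcases eq_or_ne k i with h | h
            · subst h; simp only [eq_self_iff_true, if_true]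
            · simp only [if_neg h, if_neg (Ne.symm h), zero_mul]),
        Finset.sum_ite_eq']
      simp only [Finset.mem_univ, if_true]
      generalize hg : Real.sqrt (κ'' i) = si
      rw [show κ'' i = si * si from by rw [← hg, Real.mul_self_sqrt (hκ'' i).le]]
      have hg0 : si ≠ 0 := by rw [← hg]; exact (hs'' i).ne'
      field_simp [Real.exp_ne_zero]
      ring
    · simp only [if_neg hij]
      rw [Finset.sum_congr rfl
          (g := fun k => if k = i then
              -((Real.sqrt (κ'' i))⁻¹ * (κ'' i * (Real.exp (κ'' i * r))⁻¹)) *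
                ((0 - Real.exp (κ'' i * r) ^ 2 * Real.exp (κ'' j * r) *
                    Q₀ i 0 * Q₀ j 0 / Dd) * Real.sqrt (κ'' j))
            else 0)
          (fun k _ => by
            rcases eq_or_ne k i with h | h
            · subst h; simp only [eq_self_iff_true, if_true, if_neg hij]
            · simp only [if_neg h, if_neg (Ne.symm h), zero_mul]),
        Finset.sum_ite_eq']
      simp only [Finset.mem_univ, if_true]
      generalize hg : Real.sqrt (κ'' i) = si
      rw [show κ'' i = si * si from by rw [← hg, Real.mul_self_sqrt (hκ'' i).le]]
      have hg0 : si ≠ 0 := by rw [← hg]; exact (hs'' i).ne'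
      field_simp [Real.exp_ne_zero, (hs'' j).ne']
      ring
end
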